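/- arXiv:2511.02763 — 6 statements merged into one kernel-verified Lean document; each statement's English description precedes it below -/
import Mathlib

section
/- Let F be a CDF with E[X_+] < ∞, M = sup{x : F(x) < 1}, φ(x) = ∫_x^∞ (1 − F(u)) du, and let μ₀ satisfy 0 ≤ μ₀ < M. Then the function Ψ(x) = ∫_{μ₀}^x du/φ(u), defined on [μ₀, M), is strictly increasing, strictly convex, continuously differentiable with Ψ'(x) = 1/φ(x), and satisfies lim_{x→M⁻} Ψ(x) = +∞. -/
/-!
With `g = 1 - F`, the tail integral `φ x = ∫_x^∞ g` satisfies
`(y - x) g y ≤ φ x - φ y = ∫_x^y g ≤ y - x` for `x ≤ y`, so `φ` is continuous, positive and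
strictly decreasing below `M`, and `Ψ' = 1/φ` is positive and strictly increasing there.
For divergence, monotonicity and the Lipschitz bound give
`Ψ y - Ψ x ≥ (y - x) / φ x ≥ 1 - φ y / φ x`; since `φ → 0` at `M`, `Ψ` gains at least `1/2`
over every far enough stretch of `[μ₀, M)`.
-/

open MeasureTheory Set Filter Topology

lemma Antitone.integrableOn_Ioi {g : ℝ → ℝ} (hg : Antitone g) {a : ℝ}
    (hga : IntegrableOn g (Ioi a)) (x : ℝ) : IntegrableOn g (Ioi x) := by
  rcases le_or_gt a x with hax | hxa
  · exact hga.mono_set (Ioi_subset_Ioi hax)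
  · rw [← Ioc_union_Ioi_eq_Ioi hxa.le]
    exact ((hg.antitoneOn _).integrableOn_isCompact isCompact_Icc).mono_set
      Ioc_subset_Icc_self |>.union hga

lemma Filter.tendsto_atTop_of_eventually_add_le {α : Type*} {l : Filter α} [l.NeBot]
    {f : α → ℝ} {c : ℝ} (hc : 0 < c) (h : ∀ᶠ x in l, ∀ᶠ y in l, f x + c ≤ f y) :
    Tendsto f l atTop := by
  obtain ⟨x₀, hx₀⟩ := h.exists
  have key : ∀ n : ℕ, ∀ᶠ y in l, f x₀ + (n + 1) * c ≤ f y := by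
    intro n
    induction n with
    | zero => simpa using hx₀
    | succ n ih =>
      obtain ⟨x, hx, hxy⟩ := (ih.and h).exists
      filter_upwards [hxy] with y hy
      push_cast
      linarith
  refine tendsto_atTop.2 fun b => ?_
  obtain ⟨n, hn⟩ := exists_nat_ge ((b - f x₀) / c)
  filter_upwards [key n] with y hy
  have : b - f x₀ ≤ n * c := (div_le_iff₀ hc).1 hn
  nlinarith

lemma hasDerivAt_integral_of_continuousOn {E : Type*} [NormedAddCommGroup E] [NormedSpace ℝ E]
    [CompleteSpace E] {f : ℝ → E} {I : Set ℝ} (hI : IsOpen I) (hI' : I.OrdConnected)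
    (hf : ContinuousOn f I) {a x : ℝ} (ha : a ∈ I) (hx : x ∈ I) :
    HasDerivAt (fun y => ∫ t in a..y, f t) (f x) x :=
  intervalIntegral.integral_hasDerivAt_right
    ((hf.mono (hI'.uIcc_subset ha hx)).intervalIntegrable)
    (hf.stronglyMeasurableAtFilter hI x hx) (hf.continuousAt (hI.mem_nhds hx))

lemma strictMonoOn_of_hasDerivAt_pos {D : Set ℝ} (hD : Convex ℝ D) {f f' : ℝ → ℝ}
    (hf : ∀ x ∈ D, HasDerivAt f (f' x) x) (hf' : ∀ x ∈ D, 0 < f' x) : StrictMonoOn f D :=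
  strictMonoOn_of_hasDerivWithinAt_pos hD (fun x hx => (hf x hx).continuousAt.continuousWithinAt)
    (fun x hx => (hf x (interior_subset hx)).hasDerivWithinAt)
    (fun x hx => hf' x (interior_subset hx))

lemma strictConvexOn_of_hasDerivAt {D : Set ℝ} (hD : Convex ℝ D) {f f' : ℝ → ℝ}
    (hf : ∀ x ∈ D, HasDerivAt f (f' x) x) (hf' : StrictMonoOn f' D) :
    StrictConvexOn ℝ D f := by
  refine StrictMonoOn.strictConvexOn_of_deriv hD
    (fun x hx => (hf x hx).continuousAt.continuousWithinAt) fun x hx y hy hxy => ?_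
  rw [(hf x (interior_subset hx)).deriv, (hf y (interior_subset hy)).deriv]
  exact hf' (interior_subset hx) (interior_subset hy) hxy

lemma one_sub_div_le_integral_inv {φ : ℝ → ℝ} (hφ : Antitone φ) {x y : ℝ} (hxy : x ≤ y)
    (hy : 0 < φ y) (hlip : φ x - φ y ≤ y - x) :
    1 - φ y / φ x ≤ ∫ u in x..y, (φ u)⁻¹ := by
  have hx : 0 < φ x := hy.trans_le (hφ hxy)
  have hmono : MonotoneOn (fun u => (φ u)⁻¹) (uIcc x y) := by
    rw [uIcc_of_le hxy]
    exact fun u _ v hv huv => inv_anti₀ (hy.trans_le (hφ hv.2)) (hφ huv)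
  calc 1 - φ y / φ x = (φ x - φ y) * (φ x)⁻¹ := by field_simp
    _ ≤ (y - x) * (φ x)⁻¹ := by gcongr
    _ = ∫ _ in x..y, (φ x)⁻¹ := by simp
    _ ≤ ∫ u in x..y, (φ u)⁻¹ :=
      intervalIntegral.integral_mono_on hxy intervalIntegrable_const hmono.intervalIntegrable
        fun u hu => inv_anti₀ (hy.trans_le (hφ hu.2)) (hφ hu.1)

lemma MeasureTheory.Integrable.integrableOn_Ioi_measureReal_lt {α : Type*} [MeasurableSpace α]
    {μ : Measure α} {f : α → ℝ} (hf : Integrable f μ) (hf0 : 0 ≤ᵐ[μ] f) :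
    IntegrableOn (fun t => μ.real {a | t < f a}) (Ioi 0) := by
  have hanti : Antitone fun t : ℝ => μ {a | t < f a} :=
    fun s t hst => measure_mono fun a ha => hst.trans_lt ha
  refine integrable_toReal_of_lintegral_ne_top hanti.measurable.aemeasurable ?_
  rw [← lintegral_eq_lintegral_meas_lt μ hf0 hf.aemeasurable]
  exact hf.lintegral_lt_top.ne

lemma integrableOn_Ioi_measureReal_lt_of_integrable_max {Ω : Type*} [MeasurableSpace Ω]
    {μ : Measure Ω} [IsFiniteMeasure μ] {X : Ω → ℝ}
    (hX : Integrable (fun ω => max (X ω) 0) μ) (x : ℝ) :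
    IntegrableOn (fun u => μ.real {ω | u < X ω}) (Ioi x) := by
  have hanti : Antitone fun u => μ.real {ω | u < X ω} :=
    fun s t hst => measureReal_mono fun ω h => hst.trans_lt h
  refine hanti.integrableOn_Ioi (IntegrableOn.congr_fun (hX.integrableOn_Ioi_measureReal_lt
    (ae_of_all _ fun ω => le_max_right _ _)) (fun t ht => ?_) measurableSet_Ioi) x
  simp only [lt_max_iff, lt_asymm (mem_Ioi.1 ht), or_false]

namespace EReal

lemma ordConnected_setOf_coe_lt (M : EReal) : {x : ℝ | (x : EReal) < M}.OrdConnected :=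
  ordConnected_Iio.preimage_mono coe_strictMono.monotone

lemma isOpen_setOf_coe_lt (M : EReal) : IsOpen {x : ℝ | (x : EReal) < M} :=
  isOpen_Iio.preimage continuous_coe_real_ereal

lemma eventually_lt_comap_coe_nhdsLT {M : EReal} {x : ℝ} (hx : (x : EReal) < M) :
    ∀ᶠ y in comap ((↑) : ℝ → EReal) (𝓝[<] M), x < y ∧ (y : EReal) < M := by
  filter_upwards [preimage_mem_comap (Ioo_mem_nhdsLT hx)] with y hy
  exact ⟨EReal.coe_lt_coe_iff.1 hy.1, hy.2⟩

lemma comap_coe_nhdsLT_neBot {M : EReal} {x : ℝ} (hx : (x : EReal) < M) :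
    (comap ((↑) : ℝ → EReal) (𝓝[<] M)).NeBot := by
  refine comap_neBot fun t ht => ?_
  obtain ⟨l, hl, hlt⟩ := (mem_nhdsLT_iff_exists_Ioo_subset' hx).1 ht
  obtain ⟨y, hly, hyM⟩ := lt_iff_exists_real_btwn.1 hl
  exact ⟨y, hlt ⟨hly, hyM⟩⟩

lemma comap_coe_nhdsLT_top : comap ((↑) : ℝ → EReal) (𝓝[<] ⊤) = atTop := by
  rw [Iio_top, nhdsWithin_top, comap_map coe_injective]

lemma comap_coe_nhdsLT_coe_le (m : ℝ) : comap ((↑) : ℝ → EReal) (𝓝[<] m) ≤ 𝓝 m := by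
  rw [isEmbedding_coe.nhds_eq_comap m]
  exact comap_mono nhdsWithin_le_nhds

end EReal

noncomputable def tailIntegral (g : ℝ → ℝ) (x : ℝ) : ℝ := ∫ u in Ioi x, g u

noncomputable def rightEnd (g : ℝ → ℝ) : EReal := sSup ((↑) '' {u : ℝ | 0 < g u})

section TailIntegral

variable {g : ℝ → ℝ}

lemma intervalIntegrable_of_integrableOn_Ioi (hgi : ∀ x, IntegrableOn g (Ioi x)) (a b : ℝ) :
    IntervalIntegrable g volume a b :=
  ⟨(hgi a).mono_set Ioc_subset_Ioi_self, (hgi b).mono_set Ioc_subset_Ioi_self⟩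

lemma tailIntegral_sub_tailIntegral (hgi : ∀ x, IntegrableOn g (Ioi x)) (x y : ℝ) :
    tailIntegral g x - tailIntegral g y = ∫ u in x..y, g u :=
  intervalIntegral.integral_Ioi_sub_Ioi' (hgi x) (hgi y)

lemma tailIntegral_nonneg (hg0 : 0 ≤ g) (x : ℝ) : 0 ≤ tailIntegral g x :=
  setIntegral_nonneg measurableSet_Ioi fun u _ => hg0 u

lemma tailIntegral_antitone (hg0 : 0 ≤ g) (hgi : ∀ x, IntegrableOn g (Ioi x)) :
    Antitone (tailIntegral g) := fun x y hxy => by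
  have := tailIntegral_sub_tailIntegral hgi x y
  have : 0 ≤ ∫ u in x..y, g u := intervalIntegral.integral_nonneg hxy fun u _ => hg0 u
  linarith

lemma tailIntegral_sub_le (hg1 : g ≤ 1) (hgi : ∀ x, IntegrableOn g (Ioi x)) {x y : ℝ}
    (hxy : x ≤ y) : tailIntegral g x - tailIntegral g y ≤ y - x := by
  rw [tailIntegral_sub_tailIntegral hgi]
  calc ∫ u in x..y, g u ≤ ∫ _ in x..y, (1 : ℝ) :=
        intervalIntegral.integral_mono_on hxy (intervalIntegrable_of_integrableOn_Ioi hgi x y)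
          intervalIntegrable_const fun u _ => hg1 u
    _ = y - x := by simp

lemma mul_le_tailIntegral_sub (hg : Antitone g) (hgi : ∀ x, IntegrableOn g (Ioi x)) {x y : ℝ}
    (hxy : x ≤ y) : (y - x) * g y ≤ tailIntegral g x - tailIntegral g y := by
  rw [tailIntegral_sub_tailIntegral hgi]
  calc (y - x) * g y = ∫ _ in x..y, g y := by simp
    _ ≤ ∫ u in x..y, g u :=
        intervalIntegral.integral_mono_on hxy intervalIntegrable_const
          (intervalIntegrable_of_integrableOn_Ioi hgi x y) fun u hu => hg hu.2

lemma continuous_tailIntegral (hgi : ∀ x, IntegrableOn g (Ioi x)) :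
    Continuous (tailIntegral g) := by
  have h : tailIntegral g = fun x => tailIntegral g 0 - ∫ u in 0..x, g u := by
    ext x
    rw [← tailIntegral_sub_tailIntegral hgi]
    ring
  rw [h]
  exact continuous_const.sub
    (intervalIntegral.continuous_primitive (intervalIntegrable_of_integrableOn_Ioi hgi) 0)

lemma tendsto_tailIntegral_atTop (hgi : ∀ x, IntegrableOn g (Ioi x)) :
    Tendsto (tailIntegral g) atTop (𝓝 0) := by
  have h := tendsto_setIntegral_of_antitone (μ := volume) (f := g)
    (fun x : ℝ => measurableSet_Ioi) (fun x y hxy => Ioi_subset_Ioi hxy) ⟨0, hgi 0⟩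
  have hempty : ⋂ x : ℝ, Ioi x = ∅ :=
    eq_empty_of_forall_notMem fun u hu => lt_irrefl u (mem_iInter.1 hu u)
  rwa [hempty, Measure.restrict_empty, integral_zero_measure] at h

lemma exists_gt_pos_of_lt_rightEnd {x : ℝ} (hx : (x : EReal) < rightEnd g) :
    ∃ y, x < y ∧ 0 < g y := by
  obtain ⟨_, ⟨y, hy, rfl⟩, hxy⟩ := lt_sSup_iff.1 hx
  exact ⟨y, EReal.coe_lt_coe_iff.1 hxy, hy⟩

lemma pos_of_lt_rightEnd (hg : Antitone g) {x : ℝ} (hx : (x : EReal) < rightEnd g) : 0 < g x := by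
  obtain ⟨y, hxy, hy⟩ := exists_gt_pos_of_lt_rightEnd hx
  exact hy.trans_le (hg hxy.le)

lemma tailIntegral_eq_zero_of_rightEnd_le (hg0 : 0 ≤ g) {x : ℝ} (hx : rightEnd g ≤ x) :
    tailIntegral g x = 0 := by
  refine setIntegral_eq_zero_of_forall_eq_zero fun u hu =>
    le_antisymm (not_lt.1 fun hgu => ?_) (hg0 u)
  have : (u : EReal) ≤ x := (le_sSup ⟨u, hgu, rfl⟩ : (u : EReal) ≤ rightEnd g).trans hx
  exact (EReal.coe_le_coe_iff.1 this).not_gt hu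

lemma tailIntegral_pos (hg : Antitone g) (hg0 : 0 ≤ g) (hgi : ∀ x, IntegrableOn g (Ioi x))
    {x : ℝ} (hx : (x : EReal) < rightEnd g) : 0 < tailIntegral g x := by
  obtain ⟨y, hxy, hy⟩ := exists_gt_pos_of_lt_rightEnd hx
  linarith [mul_pos (sub_pos.2 hxy) hy, mul_le_tailIntegral_sub hg hgi hxy.le,
    tailIntegral_nonneg hg0 y]

lemma tailIntegral_strictAntiOn (hg : Antitone g) (hgi : ∀ x, IntegrableOn g (Ioi x)) :
    StrictAntiOn (tailIntegral g) {x : ℝ | (x : EReal) < rightEnd g} := fun x _ y hy hxy => by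
  linarith [mul_pos (sub_pos.2 hxy) (pos_of_lt_rightEnd hg hy),
    mul_le_tailIntegral_sub hg hgi hxy.le]

lemma tendsto_tailIntegral_rightEnd (hg0 : 0 ≤ g) (hgi : ∀ x, IntegrableOn g (Ioi x)) :
    Tendsto (tailIntegral g) (comap (↑) (𝓝[<] rightEnd g)) (𝓝 0) := by
  induction h : rightEnd g using EReal.rec with
  | bot => simp
  | coe m =>
    rw [← tailIntegral_eq_zero_of_rightEnd_le hg0 h.le]
    exact ((continuous_tailIntegral hgi).tendsto m).mono_left (EReal.comap_coe_nhdsLT_coe_le m)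
  | top =>
    rw [EReal.comap_coe_nhdsLT_top]
    exact tendsto_tailIntegral_atTop hgi

lemma continuousOn_inv_tailIntegral (hg : Antitone g) (hg0 : 0 ≤ g)
    (hgi : ∀ x, IntegrableOn g (Ioi x)) :
    ContinuousOn (fun x => (tailIntegral g x)⁻¹) {x : ℝ | (x : EReal) < rightEnd g} :=
  (continuous_tailIntegral hgi).continuousOn.inv₀ fun _ hx => (tailIntegral_pos hg hg0 hgi hx).ne'

lemma intervalIntegrable_inv_tailIntegral (hg : Antitone g) (hg0 : 0 ≤ g)
    (hgi : ∀ x, IntegrableOn g (Ioi x)) {a b : ℝ} (ha : (a : EReal) < rightEnd g)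
    (hb : (b : EReal) < rightEnd g) :
    IntervalIntegrable (fun x => (tailIntegral g x)⁻¹) volume a b :=
  ((continuousOn_inv_tailIntegral hg hg0 hgi).mono
    ((EReal.ordConnected_setOf_coe_lt _).uIcc_subset ha hb)).intervalIntegrable

lemma hasDerivAt_integral_inv_tailIntegral (hg : Antitone g) (hg0 : 0 ≤ g)
    (hgi : ∀ x, IntegrableOn g (Ioi x)) {a x : ℝ} (ha : (a : EReal) < rightEnd g)
    (hx : (x : EReal) < rightEnd g) :
    HasDerivAt (fun y => ∫ u in a..y, (tailIntegral g u)⁻¹) (tailIntegral g x)⁻¹ x :=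
  hasDerivAt_integral_of_continuousOn (EReal.isOpen_setOf_coe_lt _)
    (EReal.ordConnected_setOf_coe_lt _) (continuousOn_inv_tailIntegral hg hg0 hgi) ha hx

lemma tendsto_integral_inv_tailIntegral (hg : Antitone g) (hg0 : 0 ≤ g) (hg1 : g ≤ 1)
    (hgi : ∀ x, IntegrableOn g (Ioi x)) {a : ℝ} (ha : (a : EReal) < rightEnd g) :
    Tendsto (fun x => ∫ u in a..x, (tailIntegral g u)⁻¹) (comap (↑) (𝓝[<] rightEnd g))
      atTop := by
  have := EReal.comap_coe_nhdsLT_neBot ha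
  refine tendsto_atTop_of_eventually_add_le (c := 1 / 2) (by norm_num) ?_
  filter_upwards [EReal.eventually_lt_comap_coe_nhdsLT ha] with x hx
  replace hx := hx.2
  have hφx := tailIntegral_pos hg hg0 hgi hx
  filter_upwards [EReal.eventually_lt_comap_coe_nhdsLT hx,
    (tendsto_order.1 (tendsto_tailIntegral_rightEnd hg0 hgi)).2 _ (half_pos hφx)]
    with y hy hφy
  obtain ⟨hxy, hy⟩ := hy
  have h := one_sub_div_le_integral_inv (tailIntegral_antitone hg0 hgi) hxy.le
    (tailIntegral_pos hg hg0 hgi hy) (tailIntegral_sub_le hg1 hgi hxy.le)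
  rw [← intervalIntegral.integral_interval_sub_left
    (intervalIntegrable_inv_tailIntegral hg hg0 hgi ha hy)
    (intervalIntegrable_inv_tailIntegral hg hg0 hgi ha hx)] at h
  have : tailIntegral g y / tailIntegral g x ≤ 1 / 2 := by
    rw [div_le_iff₀ hφx]
    linarith
  linarith

end TailIntegral

theorem stmt5_general {Ω : Type*} [MeasurableSpace Ω] (P : Measure Ω) [IsProbabilityMeasure P]
    (X : Ω → ℝ) (hX : Measurable X)
    (hint : Integrable (fun ω => max (X ω) 0) P)
    (F : ℝ → ℝ) (hF : ∀ x, F x = (P {ω | X ω ≤ x}).toReal)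
    (M : EReal) (hM : M = sSup ((fun x : ℝ => (x : EReal)) '' {x : ℝ | F x < 1}))
    (φ : ℝ → ℝ) (hφ : ∀ x, φ x = ∫ u in Ioi x, (1 - F u))
    (μ₀ : ℝ) (hμ₀M : (μ₀ : EReal) < M)
    (Ψ : ℝ → ℝ) (hΨ : ∀ x, Ψ x = ∫ u in μ₀..x, (φ u)⁻¹) :
    StrictMonoOn Ψ {x : ℝ | μ₀ ≤ x ∧ (x : EReal) < M} ∧
    StrictConvexOn ℝ {x : ℝ | μ₀ ≤ x ∧ (x : EReal) < M} Ψ ∧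
    (∀ x : ℝ, μ₀ ≤ x → (x : EReal) < M → HasDerivAt Ψ (1 / φ x) x) ∧
    ContinuousOn (fun x => 1 / φ x) {x : ℝ | μ₀ ≤ x ∧ (x : EReal) < M} ∧
    Tendsto Ψ (Filter.comap (fun x : ℝ => (x : EReal)) (nhdsWithin M (Iio M))) atTop := by
  set g : ℝ → ℝ := fun u => P.real {ω | u < X ω}
  have hFg : ∀ u, 1 - F u = g u := fun u => by
    rw [hF, ← measureReal_def,
      ← probReal_compl_eq_one_sub (measurableSet_le hX measurable_const)]
    simp only [g, compl_ofPred, not_le]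
  have hg : Antitone g := fun s t hst => measureReal_mono fun ω h => hst.trans_lt h
  have hg0 : 0 ≤ g := fun _ => measureReal_nonneg
  have hg1 : g ≤ 1 := fun _ => measureReal_le_one
  have hgi : ∀ x, IntegrableOn g (Ioi x) := integrableOn_Ioi_measureReal_lt_of_integrable_max hint
  obtain rfl : φ = tailIntegral g := funext fun x => by simp only [hφ, hFg, tailIntegral]
  obtain rfl : M = rightEnd g := by simp only [hM, rightEnd, ← hFg, sub_pos]
  have hderiv : ∀ x : ℝ, (x : EReal) < rightEnd g →
      HasDerivAt Ψ (tailIntegral g x)⁻¹ x := by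
    rw [funext hΨ]
    exact fun x => hasDerivAt_integral_inv_tailIntegral hg hg0 hgi hμ₀M
  have hS : Convex ℝ {x : ℝ | μ₀ ≤ x ∧ (x : EReal) < rightEnd g} :=
    (convex_Ici μ₀).inter (EReal.ordConnected_setOf_coe_lt _).convex
  refine ⟨strictMonoOn_of_hasDerivAt_pos hS (fun x hx => hderiv x hx.2)
      fun x hx => inv_pos.2 (tailIntegral_pos hg hg0 hgi hx.2),
    strictConvexOn_of_hasDerivAt hS (fun x hx => hderiv x hx.2) fun x hx y hy hxy =>
      inv_strictAnti₀ (tailIntegral_pos hg hg0 hgi hy.2)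
        (tailIntegral_strictAntiOn hg hgi hx.2 hy.2 hxy),
    fun x _ hx => by simpa only [one_div] using hderiv x hx,
    by simpa only [one_div] using (continuousOn_inv_tailIntegral hg hg0 hgi).mono fun x hx => hx.2,
    funext hΨ ▸ tendsto_integral_inv_tailIntegral hg hg0 hg1 hgi hμ₀M⟩

/-- Ψ(x) = ∫_{μ₀}^x du/φ(u) on [μ₀, M) is strictly increasing, strictly convex,
continuously differentiable with Ψ'(x) = 1/φ(x), and Ψ(x) → +∞ as x → M⁻. -/
theorem stmt5 {Ω : Type*} [MeasurableSpace Ω] (P : Measure Ω) [IsProbabilityMeasure P]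
    (X : Ω → ℝ) (hX : Measurable X)
    (hint : Integrable (fun ω => max (X ω) 0) P)
    (F : ℝ → ℝ) (hF : ∀ x, F x = (P {ω | X ω ≤ x}).toReal)
    (M : EReal) (hM : M = sSup ((fun x : ℝ => (x : EReal)) '' {x : ℝ | F x < 1}))
    (φ : ℝ → ℝ) (hφ : ∀ x, φ x = ∫ u in Ioi x, (1 - F u))
    (μ₀ : ℝ) (hμ₀ : 0 ≤ μ₀) (hμ₀M : (μ₀ : EReal) < M)
    (Ψ : ℝ → ℝ) (hΨ : ∀ x, Ψ x = ∫ u in μ₀..x, (φ u)⁻¹) :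
    StrictMonoOn Ψ {x : ℝ | μ₀ ≤ x ∧ (x : EReal) < M} ∧
    StrictConvexOn ℝ {x : ℝ | μ₀ ≤ x ∧ (x : EReal) < M} Ψ ∧
    (∀ x : ℝ, μ₀ ≤ x → (x : EReal) < M → HasDerivAt Ψ (1 / φ x) x) ∧
    ContinuousOn (fun x => 1 / φ x) {x : ℝ | μ₀ ≤ x ∧ (x : EReal) < M} ∧
    Tendsto Ψ (Filter.comap (fun x : ℝ => (x : EReal)) (nhdsWithin M (Iio M))) atTop :=
  stmt5_general P X hX hint F hF M hM φ hφ μ₀ hμ₀M Ψ hΨ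
end

section
/- Suppose the random variable X satisfies E[X_+^p] < ∞ for some p > 1, and let μ solve μ'(t) = λφ(μ(t)), μ(0) = μ₀ with μ₀ ≥ 0, where φ(x) = E[(X−x)_+]. Then for all t ≥ 0, μ(t) ≤ μ₀ + (E[(X−μ₀)_+^p])^{1/p}·(λt)^{1/p}. -/
/-!
Along the trajectory put `s = μ t - μ₀ ≥ 0`. Convexity of `a ↦ a ^ p` gives, pointwise in `X`,
`p s^(p-1) (X - μ₀ - s)₊ ≤ (X - μ₀)₊^p`, and taking expectations
`p s^(p-1) φ(μ₀ + s) ≤ C := E[(X - μ₀)₊^p]`. Hence `d/dt (μ t - μ₀)^p = λ φ(μ t) p s^(p-1) ≤ λ C`,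
so `(μ t - μ₀)^p ≤ λ C t`; take `p`-th roots.
-/

open MeasureTheory Set

lemma Real.rpow_add_mul_rpow_sub_one_mul_sub_le {p : ℝ} (hp : 1 ≤ p) {s a : ℝ} (hs : 0 < s)
    (ha : 0 ≤ a) : s ^ p + p * s ^ (p - 1) * (a - s) ≤ a ^ p := by
  have bernoulli := one_add_mul_self_le_rpow_one_add
    (by linarith [div_nonneg ha hs.le] : -1 ≤ a / s - 1) hp
  rw [add_sub_cancel, Real.div_rpow ha hs.le, le_div_iff₀ (Real.rpow_pos_of_pos hs p)]
    at bernoulli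
  calc s ^ p + p * s ^ (p - 1) * (a - s) = (1 + p * (a / s - 1)) * s ^ p := by
        rw [Real.rpow_sub_one hs.ne']; field_simp
    _ ≤ a ^ p := bernoulli

lemma Real.mul_rpow_sub_one_mul_posPart_sub_le {p : ℝ} (hp : 1 < p) {s a : ℝ} (hs : 0 ≤ s)
    (ha : 0 ≤ a) : p * s ^ (p - 1) * max (a - s) 0 ≤ a ^ p := by
  have hap : 0 ≤ a ^ p := Real.rpow_nonneg ha p
  rcases le_or_gt a s with has | has
  · simpa [max_eq_right (sub_nonpos.mpr has)] using hap
  rcases hs.eq_or_lt with rfl | hs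
  · simpa [Real.zero_rpow (sub_ne_zero.mpr hp.ne')] using hap
  rw [max_eq_left (sub_nonneg.mpr has.le)]
  linarith [Real.rpow_add_mul_rpow_sub_one_mul_sub_le hp.le hs ha, Real.rpow_nonneg hs.le p]

section PosPart

variable {Ω : Type*} [MeasurableSpace Ω] {P : Measure Ω} {X : Ω → ℝ} {p : ℝ}

lemma integrable_rpow_posPart_sub (hX : AEMeasurable X P) (hp : 0 ≤ p) {m : ℝ} (hm : 0 ≤ m)
    (hint : Integrable (fun ω => max (X ω) 0 ^ p) P) :
    Integrable (fun ω => max (X ω - m) 0 ^ p) P := by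
  refine hint.mono ?_ (ae_of_all _ fun ω => ?_)
  · exact (((hX.sub_const m).max aemeasurable_const).pow_const p).aestronglyMeasurable
  · have hle : max (X ω - m) 0 ≤ max (X ω) 0 := max_le_max (by linarith) le_rfl
    rw [Real.norm_of_nonneg (Real.rpow_nonneg (le_max_right _ _) _),
      Real.norm_of_nonneg (Real.rpow_nonneg (le_max_right _ _) _)]
    exact Real.rpow_le_rpow (le_max_right _ _) hle hp

lemma mul_rpow_sub_one_mul_integral_posPart_sub_le (hp : 1 < p) {m₀ m : ℝ} (hm : m₀ ≤ m)
    (hint : Integrable (fun ω => max (X ω - m₀) 0 ^ p) P) :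
    p * (m - m₀) ^ (p - 1) * ∫ ω, max (X ω - m) 0 ∂P ≤ ∫ ω, max (X ω - m₀) 0 ^ p ∂P := by
  have hs : 0 ≤ m - m₀ := sub_nonneg.mpr hm
  have hcoef : 0 ≤ p * (m - m₀) ^ (p - 1) := by positivity
  rw [← integral_const_mul]
  refine integral_mono_of_nonneg (ae_of_all _ fun ω => by positivity) hint
    (ae_of_all _ fun ω => ?_)
  have hshift : max (X ω - m) 0 ≤ max (max (X ω - m₀) 0 - (m - m₀)) 0 :=
    max_le_max (by linarith [le_max_left (X ω - m₀) 0]) le_rfl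
  calc p * (m - m₀) ^ (p - 1) * max (X ω - m) 0
      ≤ p * (m - m₀) ^ (p - 1) * max (max (X ω - m₀) 0 - (m - m₀)) 0 :=
        mul_le_mul_of_nonneg_left hshift hcoef
    _ ≤ max (X ω - m₀) 0 ^ p :=
        Real.mul_rpow_sub_one_mul_posPart_sub_le hp hs (le_max_right _ _)

end PosPart

lemma monotoneOn_Ici_of_hasDerivAt_nonneg {f f' : ℝ → ℝ} {a : ℝ}
    (hf : ∀ t, a ≤ t → HasDerivAt f (f' t) t) (hf' : ∀ t, a < t → 0 ≤ f' t) :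
    MonotoneOn f (Ici a) := by
  refine monotoneOn_of_hasDerivWithinAt_nonneg (f' := f') (convex_Ici a)
    (fun t ht => (hf t ht).continuousAt.continuousWithinAt) (fun t ht => ?_) (fun t ht => ?_)
  · rw [interior_Ici] at ht ⊢
    exact (hf t (le_of_lt ht)).hasDerivWithinAt
  · rw [interior_Ici] at ht
    exact hf' t ht

lemma le_add_rpow_of_hasDerivAt {μ φ : ℝ → ℝ} {lam p C μ₀ : ℝ} (hlam : 0 ≤ lam) (hp : 1 ≤ p)
    (hφ : ∀ x, 0 ≤ φ x) (hC : ∀ x, μ₀ ≤ x → p * (x - μ₀) ^ (p - 1) * φ x ≤ C)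
    (hinit : μ 0 = μ₀) (hode : ∀ t, 0 ≤ t → HasDerivAt μ (lam * φ (μ t)) t)
    {t : ℝ} (ht : 0 ≤ t) : μ t ≤ μ₀ + (C * (lam * t)) ^ (1 / p) := by
  have hp0 : 0 < p := by linarith
  have hge : ∀ t, 0 ≤ t → μ₀ ≤ μ t := fun t ht =>
    hinit ▸ monotoneOn_Ici_of_hasDerivAt_nonneg hode (fun t _ => mul_nonneg hlam (hφ _))
      self_mem_Ici ht ht
  have hgap : MonotoneOn (fun t => C * (lam * t) - (μ t - μ₀) ^ p) (Ici 0) := by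
    refine monotoneOn_Ici_of_hasDerivAt_nonneg
      (f' := fun t => C * lam - lam * φ (μ t) * p * (μ t - μ₀) ^ (p - 1))
      (fun t ht => ?_) (fun t ht => ?_)
    · exact (((hasDerivAt_id t).const_mul lam).const_mul C |>.congr_deriv (by ring)).sub
        (((hode t ht).sub_const μ₀).rpow_const (Or.inr hp))
    · have := mul_le_mul_of_nonneg_left (hC _ (hge t ht.le)) hlam
      linarith
  have hpow : (μ t - μ₀) ^ p ≤ C * (lam * t) := by
    have := hgap self_mem_Ici ht ht
    simp only [hinit, sub_self, Real.zero_rpow hp0.ne', mul_zero] at this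
    linarith
  have hC0 : 0 ≤ C * (lam * t) := (Real.rpow_nonneg (sub_nonneg.mpr (hge t ht)) p).trans hpow
  rw [← sub_le_iff_le_add', one_div]
  exact (Real.le_rpow_inv_iff_of_pos (sub_nonneg.mpr (hge t ht)) hC0 hp0).mpr hpow

theorem stmt12_general {Ω : Type*} [MeasurableSpace Ω] (P : Measure Ω)
    (X : Ω → ℝ) (hX : Measurable X) (p : ℝ) (hp : 1 < p)
    (hint : Integrable (fun ω => (max (X ω) 0) ^ p) P)
    (φ : ℝ → ℝ) (hφ : ∀ x, φ x = ∫ ω, max (X ω - x) 0 ∂P)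
    (lam μ₀ : ℝ) (hlam : 0 < lam) (hμ₀ : 0 ≤ μ₀)
    (μ : ℝ → ℝ) (hinit : μ 0 = μ₀)
    (hode : ∀ t : ℝ, 0 ≤ t → HasDerivAt μ (lam * φ (μ t)) t) :
    ∀ t : ℝ, 0 ≤ t →
      μ t ≤ μ₀ + (∫ ω, (max (X ω - μ₀) 0) ^ p ∂P) ^ (1 / p) * (lam * t) ^ (1 / p) := by
  intro t ht
  have hint₀ := integrable_rpow_posPart_sub hX.aemeasurable (by linarith) hμ₀ hint
  have hφ_nonneg : ∀ x, 0 ≤ φ x := fun x =>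
    hφ x ▸ integral_nonneg fun ω => le_max_right _ _
  have hbound := le_add_rpow_of_hasDerivAt hlam.le hp.le hφ_nonneg
    (fun x hx => hφ x ▸ mul_rpow_sub_one_mul_integral_posPart_sub_le hp hx hint₀) hinit hode ht
  rwa [Real.mul_rpow (integral_nonneg fun ω => by positivity) (by positivity)] at hbound

/-- if E[X_+^p] < ∞ (p > 1) and μ solves μ' = λφ(μ), μ(0) = μ₀ with
φ(x) = E[(X−x)_+], then μ(t) ≤ μ₀ + (E[(X−μ₀)_+^p])^{1/p}·(λt)^{1/p} for all t ≥ 0. -/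
theorem stmt12 {Ω : Type*} [MeasurableSpace Ω] (P : Measure Ω) [IsProbabilityMeasure P]
    (X : Ω → ℝ) (hX : Measurable X) (p : ℝ) (hp : 1 < p)
    (hint : Integrable (fun ω => (max (X ω) 0) ^ p) P)
    (φ : ℝ → ℝ) (hφ : ∀ x, φ x = ∫ ω, max (X ω - x) 0 ∂P)
    (lam μ₀ : ℝ) (hlam : 0 < lam) (hμ₀ : 0 ≤ μ₀)
    (hμ₀M : 0 < P {ω | μ₀ < X ω})
    (μ : ℝ → ℝ) (hinit : μ 0 = μ₀)
    (hode : ∀ t : ℝ, 0 ≤ t → HasDerivAt μ (lam * φ (μ t)) t) :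
    ∀ t : ℝ, 0 ≤ t →
      μ t ≤ μ₀ + (∫ ω, (max (X ω - μ₀) 0) ^ p ∂P) ^ (1 / p) * (lam * t) ^ (1 / p) :=
  stmt12_general P X hX p hp hint φ hφ lam μ₀ hlam hμ₀ μ hinit hode
end

section
/- Suppose E[e^{δX_+}] < ∞ for some δ > 0, and let μ solve μ'(t) = λφ(μ(t)), μ(0) = μ₀ ≥ 0 with φ(x) = E[(X−x)_+]. Then for all t ≥ 0, μ(t) ≤ μ₀ + (1/δ)·ln( E[e^{δ(X−μ₀)_+}]·λt + 1 ). -/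
open MeasureTheory Set Filter

/-- if E[e^{δX_+}] < ∞ (δ > 0) and μ solves μ' = λφ(μ), μ(0) = μ₀ with
φ(x) = E[(X−x)_+], then μ(t) ≤ μ₀ + (1/δ)·ln(E[e^{δ(X−μ₀)_+}]·λt + 1) for all t ≥ 0. -/
theorem stmt13 {Ω : Type*} [MeasurableSpace Ω] (P : Measure Ω) [IsProbabilityMeasure P]
    (X : Ω → ℝ) (hX : Measurable X) (δ : ℝ) (hδ : 0 < δ)
    (hint : Integrable (fun ω => Real.exp (δ * max (X ω) 0)) P)
    (φ : ℝ → ℝ) (hφ : ∀ x, φ x = ∫ ω, max (X ω - x) 0 ∂P)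
    (lam μ₀ : ℝ) (hlam : 0 < lam) (hμ₀ : 0 ≤ μ₀)
    (hμ₀M : 0 < P {ω | μ₀ < X ω})
    (μ : ℝ → ℝ) (hinit : μ 0 = μ₀)
    (hode : ∀ t : ℝ, 0 ≤ t → HasDerivAt μ (lam * φ (μ t)) t) :
    ∀ t : ℝ, 0 ≤ t →
      μ t ≤ μ₀ + (1 / δ) *
        Real.log ((∫ ω, Real.exp (δ * max (X ω - μ₀) 0) ∂P) * (lam * t) + 1) := by
  set C := ∫ ω, Real.exp (δ * max (X ω - μ₀) 0) ∂P with hCdef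
  have hmeas : Measurable fun ω => Real.exp (δ * max (X ω - μ₀) 0) := by
    exact (Real.measurable_exp).comp (((hX.sub measurable_const).max measurable_const).const_mul δ)
  have hintC : Integrable (fun ω => Real.exp (δ * max (X ω - μ₀) 0)) P := by
    refine hint.mono hmeas.aestronglyMeasurable (ae_of_all _ fun ω => ?_)
    simp only [Real.norm_eq_abs, abs_of_nonneg (Real.exp_pos _).le]
    refine Real.exp_le_exp.2 (mul_le_mul_of_nonneg_left ?_ hδ.le)
    exact max_le_max (by linarith) le_rfl
  have hC1 : (1:ℝ) ≤ C := by
    have : (1:ℝ) = ∫ _ω : Ω, (1:ℝ) ∂P := by simp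
    rw [this]
    refine integral_mono (integrable_const 1) hintC fun ω => ?_
    exact Real.one_le_exp (mul_nonneg hδ.le (le_max_right _ _))
  have hφ0 : ∀ x, 0 ≤ φ x := fun x => by
    rw [hφ]; exact integral_nonneg fun ω => le_max_right _ _
  -- key pointwise bound
  have hkey : ∀ x, μ₀ ≤ x → φ x ≤ 1/δ * Real.exp (-(δ * (x - μ₀))) * C := by
    intro x hx
    rw [hφ]
    have hpt : ∀ ω, max (X ω - x) 0 ≤
        1/δ * Real.exp (-(δ * (x - μ₀))) * Real.exp (δ * max (X ω - μ₀) 0) := by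
      intro ω
      rcases le_or_gt (X ω) x with h | h
      · have h0 : max (X ω - x) 0 = 0 := max_eq_right (by linarith)
        rw [h0]; positivity
      · have h1 : max (X ω - x) 0 = X ω - x := max_eq_left (by linarith)
        have h2 : max (X ω - μ₀) 0 = X ω - μ₀ := max_eq_left (by linarith)
        rw [h1, h2, mul_assoc, ← Real.exp_add]
        have he : -(δ * (x - μ₀)) + δ * (X ω - μ₀) = δ * (X ω - x) := by ring
        rw [he]
        have hz := Real.add_one_le_exp (δ * (X ω - x))
        have hEpos := Real.exp_pos (δ * (X ω - x))
        rw [div_mul_eq_mul_div, one_mul, le_div_iff₀ hδ]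
        nlinarith
    calc ∫ ω, max (X ω - x) 0 ∂P
        ≤ ∫ ω, 1/δ * Real.exp (-(δ * (x - μ₀))) * Real.exp (δ * max (X ω - μ₀) 0) ∂P :=
          integral_mono_of_nonneg (ae_of_all _ fun ω => le_max_right _ _)
            (hintC.const_mul _) (ae_of_all _ hpt)
      _ = 1/δ * Real.exp (-(δ * (x - μ₀))) * C := by rw [integral_const_mul]
  -- μ is monotone on [0,∞)
  have hcont : ContinuousOn μ (Ici 0) := fun t ht => ((hode t ht).continuousAt).continuousWithinAt
  have hmono : MonotoneOn μ (Ici 0) := by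
    refine monotoneOn_of_deriv_nonneg (convex_Ici 0) hcont ?_ ?_
    · intro t ht
      rw [interior_Ici] at ht
      exact ((hode t (le_of_lt ht)).differentiableAt).differentiableWithinAt
    · intro t ht
      rw [interior_Ici] at ht
      rw [(hode t ht.le).deriv]
      exact mul_nonneg hlam.le (hφ0 _)
  have hμge : ∀ t : ℝ, 0 ≤ t → μ₀ ≤ μ t := by
    intro t ht
    rw [← hinit]
    exact hmono (self_mem_Ici) ht ht
  -- the auxiliary function g
  set g : ℝ → ℝ := fun s => lam * C * s - Real.exp (δ * (μ s - μ₀)) with hgdef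
  have hg : ∀ t : ℝ, 0 ≤ t → HasDerivAt g
      (lam * C - Real.exp (δ * (μ t - μ₀)) * (δ * (lam * φ (μ t)))) t := by
    intro t ht
    have h1 : HasDerivAt (fun s : ℝ => lam * C * s) (lam * C) t := by
      simpa using (hasDerivAt_id t).const_mul (lam * C)
    have h2 : HasDerivAt (fun s => Real.exp (δ * (μ s - μ₀)))
        (Real.exp (δ * (μ t - μ₀)) * (δ * (lam * φ (μ t)))) t := by
      have := (((hode t ht).sub_const μ₀).const_mul δ).exp
      simpa [mul_comm, mul_assoc, mul_left_comm] using this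
    exact h1.sub h2
  have hgderiv_nonneg : ∀ t : ℝ, 0 < t →
      0 ≤ lam * C - Real.exp (δ * (μ t - μ₀)) * (δ * (lam * φ (μ t))) := by
    intro t ht
    have hk := hkey (μ t) (hμge t ht.le)
    have hE : Real.exp (-(δ * (μ t - μ₀))) * Real.exp (δ * (μ t - μ₀)) = 1 := by
      rw [← Real.exp_add]; simp
    have hEpos := Real.exp_pos (δ * (μ t - μ₀))
    have hEpos' := Real.exp_pos (-(δ * (μ t - μ₀)))
    have hδφ : Real.exp (δ * (μ t - μ₀)) * (δ * φ (μ t)) ≤ C := by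
      have h3 : δ * φ (μ t) ≤ Real.exp (-(δ * (μ t - μ₀))) * C := by
        have := mul_le_mul_of_nonneg_left hk hδ.le
        calc δ * φ (μ t) ≤ δ * (1/δ * Real.exp (-(δ * (μ t - μ₀))) * C) := this
          _ = Real.exp (-(δ * (μ t - μ₀))) * C := by field_simp
      calc Real.exp (δ * (μ t - μ₀)) * (δ * φ (μ t))
          ≤ Real.exp (δ * (μ t - μ₀)) * (Real.exp (-(δ * (μ t - μ₀))) * C) :=
            mul_le_mul_of_nonneg_left h3 hEpos.le
        _ = C := by rw [← mul_assoc, mul_comm (Real.exp (δ * (μ t - μ₀))), hE, one_mul]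
    have := mul_le_mul_of_nonneg_left hδφ hlam.le
    nlinarith
  have hgcont : ContinuousOn g (Ici 0) := fun t ht => ((hg t ht).continuousAt).continuousWithinAt
  have hgmono : MonotoneOn g (Ici 0) := by
    refine monotoneOn_of_deriv_nonneg (convex_Ici 0) hgcont ?_ ?_
    · intro t ht
      rw [interior_Ici] at ht
      exact ((hg t ht.le).differentiableAt).differentiableWithinAt
    · intro t ht
      rw [interior_Ici] at ht
      rw [(hg t ht.le).deriv]
      exact hgderiv_nonneg t ht
  intro t ht
  have hg0 : g 0 = -1 := by simp [hgdef, hinit]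
  have h01 : g 0 ≤ g t := hgmono self_mem_Ici ht ht
  rw [hg0] at h01
  have hexp : Real.exp (δ * (μ t - μ₀)) ≤ C * (lam * t) + 1 := by
    simp only [hgdef] at h01; nlinarith
  have hpos : (0:ℝ) < C * (lam * t) + 1 := by nlinarith [mul_nonneg hlam.le ht]
  have hlog : δ * (μ t - μ₀) ≤ Real.log (C * (lam * t) + 1) :=
    (Real.le_log_iff_exp_le hpos).2 hexp
  have := mul_le_mul_of_nonneg_left hlog (by positivity : (0:ℝ) ≤ 1/δ)
  have h1δ : 1/δ * (δ * (μ t - μ₀)) = μ t - μ₀ := by field_simp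
  linarith [h1δ ▸ this]
end

section
/- Fix x ∈ ℝ and consider the initial value problem dG/dt = λ[ (F(μ(t)) − 1)·G(t) + (F(x) − F(μ(t)))_+ ], G(0) = F₀(x), where μ solves μ' = λφ(μ), μ(0) = μ₀. Its unique solution is G(t) = φ(μ(t))·[ F₀(x)/φ(μ₀) + ∫_{μ₀}^{μ(t)} (F(x) − F(w))_+ / φ(w)² dw ]. -/
/-
Wherever `F` is continuous at `μ t`, the integrating factor `ψ(t) = φ(μ t)` satisfies
`ψ' = λ (F(μ t) - 1) ψ`, so `G / ψ` has derivative `λ (F x - F(μ t))₊ / φ(μ t)`, which is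
also the derivative of `t ↦ ∫_{μ₀}^{μ t} (F x - F w)₊ / φ(w)² dw` by the chain rule. Since `μ`
is strictly increasing, the times at which `μ t` is a jump of the monotone `F` form a countable
set, and a continuous function with zero derivative off a countable set is constant.
Division by `φ(μ t)` is legitimate because `μ` never reaches `M`: for finite `M`, `F = 1`
beyond `M` gives `φ(w) ≤ M - w`, so `μ' ≤ λ (M - μ)` and `M - μ` decays at most exponentially.
The tails `1 - F` are integrable on half-lines by the layer-cake formula for `E[X₊] < ∞`.
-/

open MeasureTheory Set Filter ProbabilityTheory

lemma lt_of_hasDerivAt_le_mul_sub {f f' : ℝ → ℝ} {c r : ℝ} (h0 : f 0 < r)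
    (hf : ∀ t, 0 ≤ t → HasDerivAt f (f' t) t)
    (hbound : ∀ t, 0 ≤ t → f t < r → f' t ≤ c * (r - f t)) {t : ℝ} (ht : 0 ≤ t) :
    f t < r := by
  -- the barrier `B` solves `B' = (c + 1) (r - B)`, strictly faster than `f` can grow below `r`
  set B : ℝ → ℝ := fun s => r - (r - f 0) * Real.exp (-(c + 1) * s)
  have hB : ∀ s, HasDerivAt B ((c + 1) * (r - B s)) s := fun s => by
    have := (((hasDerivAt_id s).const_mul (-(c + 1))).exp.const_mul (r - f 0)).const_sub r
    exact this.congr_deriv (by simp only [B, id]; ring)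
  have hBr : ∀ s, B s < r := fun s => by
    have := mul_pos (sub_pos.2 h0) (Real.exp_pos (-(c + 1) * s))
    simp only [B]; linarith
  have hle : f t ≤ B t := image_le_of_deriv_right_lt_deriv_boundary
    (fun s hs => (hf s hs.1).continuousAt.continuousWithinAt)
    (fun s hs => (hf s hs.1).hasDerivWithinAt) (by simp [B]) hB
    (fun s hs hfs => by
      have := hbound s hs.1 (hfs ▸ hBr s)
      have := sub_pos.2 (hBr s)
      rw [hfs] at *; linarith)
    ⟨ht, le_rfl⟩
  exact hle.trans_lt (hBr t)

lemma eq_of_hasDerivAt_zero_off_countable {E : Type*} [NormedAddCommGroup E] [NormedSpace ℝ E]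
    [CompleteSpace E] {f : ℝ → E} {a b : ℝ} {s : Set ℝ} (hab : a ≤ b) (hs : s.Countable)
    (hc : ContinuousOn f (Icc a b)) (hd : ∀ x ∈ Ioo a b \ s, HasDerivAt f 0 x) : f b = f a := by
  have := integral_eq_of_hasDerivAt_off_countable_of_le f (fun _ => 0) hab hs hc hd
    intervalIntegrable_const
  rwa [intervalIntegral.integral_zero, eq_comm, sub_eq_zero] at this

lemma HasDerivAt.div_of_linear {G ψ : ℝ → ℝ} {a b t : ℝ} (hG : HasDerivAt G (a * G t + b) t)
    (hψ : HasDerivAt ψ (a * ψ t) t) (hψt : ψ t ≠ 0) :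
    HasDerivAt (fun τ => G τ / ψ τ) (b / ψ t) t := by
  refine (hG.div hψ hψt).congr_deriv ?_
  field_simp
  ring

lemma cdf_map_eq_measureReal {Ω : Type*} [MeasurableSpace Ω] {P : Measure Ω}
    [IsProbabilityMeasure P] {X : Ω → ℝ} (hX : Measurable X) (x : ℝ) :
    cdf (P.map X) x = P.real {ω | X ω ≤ x} := by
  have := Measure.isProbabilityMeasure_map (μ := P) hX.aemeasurable
  rw [cdf_eq_real, map_measureReal_apply hX measurableSet_Iic]
  rfl

lemma one_sub_cdf (ν : Measure ℝ) [IsProbabilityMeasure ν] (u : ℝ) :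
    1 - cdf ν u = ν.real (Ioi u) := by
  rw [cdf_eq_real, ← compl_Iic, probReal_compl_eq_one_sub measurableSet_Iic]

lemma integrableOn_Ioi_one_sub_cdf {ν : Measure ℝ} [IsProbabilityMeasure ν]
    (h : Integrable (fun x => max x 0) ν) (a : ℝ) :
    IntegrableOn (fun u => 1 - cdf ν u) (Ioi a) := by
  have hanti : Antitone fun u => 1 - cdf ν u := fun u v huv =>
    sub_le_sub_left (monotone_cdf ν huv) 1
  have hpos : IntegrableOn (fun u => 1 - cdf ν u) (Ioi 0) := by
    refine ⟨hanti.measurable.aestronglyMeasurable, ?_⟩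
    have hlayer := lintegral_eq_lintegral_meas_lt ν (f := fun x => max x 0)
      (ae_of_all _ fun x => le_max_right x 0) (by fun_prop)
    have hfin : ∫⁻ x, ENNReal.ofReal (max x 0) ∂ν < ⊤ := by
      simpa [HasFiniteIntegral, Real.enorm_eq_ofReal (le_max_right _ _)] using
        h.hasFiniteIntegral
    rw [HasFiniteIntegral]
    convert hfin using 1
    rw [hlayer]
    refine setLIntegral_congr_fun measurableSet_Ioi fun u (hu : 0 < u) => ?_
    rw [one_sub_cdf, Real.enorm_eq_ofReal measureReal_nonneg, ofReal_measureReal]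
    congr 1
    ext x
    simp [hu.not_gt]
  have hIcc : IntegrableOn (fun u => 1 - cdf ν u) (Icc a 0) :=
    hanti.locallyIntegrable.integrableOn_isCompact isCompact_Icc
  exact (hIcc.union hpos).mono_set fun u (hu : a < u) => by
    rcases le_or_gt u 0 with h | h
    exacts [Or.inl ⟨hu.le, h⟩, Or.inr h]

lemma exists_lt_of_coe_lt_sSup {F : ℝ → ℝ} {w : ℝ}
    (hw : (w : EReal) < sSup ((fun x : ℝ => (x : EReal)) '' {x | F x < 1})) :
    ∃ b, w < b ∧ F b < 1 := by
  obtain ⟨_, ⟨b, hb, rfl⟩, hwb⟩ := lt_sSup_iff.1 hw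
  exact ⟨b, EReal.coe_lt_coe_iff.1 hwb, hb⟩

lemma eq_one_of_sSup_lt {F : ℝ → ℝ} (hF1 : ∀ u, F u ≤ 1) {u : ℝ}
    (hu : sSup ((fun x : ℝ => (x : EReal)) '' {x | F x < 1}) < u) : F u = 1 :=
  (hF1 u).eq_or_lt.resolve_right fun h =>
    (le_sSup (mem_image_of_mem _ (show u ∈ {x | F x < 1} from h))).not_gt hu

lemma countable_setOf_not_continuousAt_comp {F μ : ℝ → ℝ} {s : Set ℝ} (hF : Monotone F)
    (hμ : InjOn μ s) : {t | t ∈ s ∧ ¬ContinuousAt F (μ t)}.Countable :=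
  MapsTo.countable_of_injOn (fun _ ht => ht.2) (hμ.mono fun _ ht => ht.1)
    hF.countable_not_continuousAt

lemma intervalIntegrable_max_sub_div_sq {F φ : ℝ → ℝ} {a b : ℝ} (hF : Monotone F)
    (hφ : ContinuousOn φ (uIcc a b)) (hφ0 : ∀ w ∈ uIcc a b, φ w ≠ 0) (x : ℝ) :
    IntervalIntegrable (fun w => max (F x - F w) 0 / φ w ^ 2) volume a b := by
  have hanti : Antitone fun w => max (F x - F w) 0 := fun u v huv =>
    max_le_max_right 0 (sub_le_sub_left (hF huv) _)
  exact hanti.intervalIntegrable.mul_continuousOn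
    ((hφ.pow 2).inv₀ fun w hw => pow_ne_zero 2 (hφ0 w hw))

section TailIntegral

variable {F φ : ℝ → ℝ} (hφ : ∀ x, φ x = ∫ u in Ioi x, (1 - F u))
  (hint : ∀ a, IntegrableOn (fun u => 1 - F u) (Ioi a))
include hφ hint

lemma tail_sub_tail (a b : ℝ) : φ a - φ b = ∫ u in a..b, (1 - F u) := by
  rw [hφ, hφ, intervalIntegral.integral_Ioi_sub_Ioi' (hint a) (hint b)]

omit hφ in
lemma intervalIntegrable_one_sub (a b : ℝ) :
    IntervalIntegrable (fun u => 1 - F u) volume a b :=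
  (intervalIntegrable_iff.2 <| (hint (min a b - 1)).mono_set fun u hu =>
    (show min a b - 1 < u by simp only [uIoc, mem_Ioc] at hu; linarith [hu.1]))

lemma tail_eq_sub_integral (a y : ℝ) : φ y = φ a - ∫ u in a..y, (1 - F u) := by
  rw [← tail_sub_tail hφ hint]; ring

lemma continuous_tail : Continuous φ := by
  rw [funext (tail_eq_sub_integral hφ hint 0)]
  exact continuous_const.sub
    (intervalIntegral.continuous_primitive (intervalIntegrable_one_sub hint) 0)

lemma hasDerivAt_tail {y : ℝ} (hF : Measurable F) (hc : ContinuousAt F y) :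
    HasDerivAt φ (F y - 1) y := by
  have := (intervalIntegral.integral_hasDerivAt_right (intervalIntegrable_one_sub hint 0 y)
    (measurable_const.sub hF).stronglyMeasurable.stronglyMeasurableAtFilter
    (continuousAt_const.sub hc)).const_sub (φ 0)
  rw [neg_sub] at this
  exact this.congr_of_eventuallyEq (.of_forall (tail_eq_sub_integral hφ hint 0))

lemma tail_le_sub (hF0 : ∀ u, 0 ≤ F u) {r w : ℝ} (hr : ∀ u, r < u → F u = 1) (hw : w ≤ r) :
    φ w ≤ r - w := by
  have hφr : φ r = 0 := by
    rw [hφ, setIntegral_congr_fun measurableSet_Ioi fun u hu => by rw [hr u hu, sub_self]]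
    simp
  have hup : ∫ u in w..r, (1 - F u) ≤ r - w := by
    simpa using intervalIntegral.integral_mono_on hw (intervalIntegrable_one_sub hint w r)
      intervalIntegrable_const fun u _ => sub_le_self 1 (hF0 u)
  linarith [tail_sub_tail hφ hint w r]

omit hint in
lemma tail_nonneg (hF1 : ∀ u, F u ≤ 1) (x : ℝ) : 0 ≤ φ x := by
  rw [hφ]
  exact setIntegral_nonneg measurableSet_Ioi fun u _ => sub_nonneg.2 (hF1 u)

lemma antitone_tail (hF1 : ∀ u, F u ≤ 1) : Antitone φ := fun a b hab => by
  have := tail_sub_tail hφ hint a b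
  have := intervalIntegral.integral_nonneg (μ := volume) hab fun u _ => sub_nonneg.2 (hF1 u)
  linarith

lemma tail_pos_of_lt_one (hF : Monotone F) (hF1 : ∀ u, F u ≤ 1) {a b : ℝ} (hab : a < b)
    (hb : F b < 1) : 0 < φ a := by
  have hlow := intervalIntegral.integral_mono_on hab.le intervalIntegrable_const
    (intervalIntegrable_one_sub hint a b) fun u hu => sub_le_sub_left (hF hu.2) 1
  rw [intervalIntegral.integral_const, smul_eq_mul] at hlow
  have := tail_sub_tail hφ hint a b
  have := tail_nonneg hφ hF1 b
  nlinarith [mul_pos (sub_pos.2 hab) (sub_pos.2 hb)]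

lemma coe_lt_sSup_of_hasDerivAt_tail {μ : ℝ → ℝ} {lam : ℝ}
    (hF0 : ∀ u, 0 ≤ F u) (hF1 : ∀ u, F u ≤ 1) (hlam : 0 ≤ lam)
    (h0 : (μ 0 : EReal) < sSup ((fun x : ℝ => (x : EReal)) '' {x | F x < 1}))
    (hode : ∀ t, 0 ≤ t → HasDerivAt μ (lam * φ (μ t)) t) {t : ℝ} (ht : 0 ≤ t) :
    (μ t : EReal) < sSup ((fun x : ℝ => (x : EReal)) '' {x | F x < 1}) := by
  generalize hM : sSup ((fun x : ℝ => (x : EReal)) '' {x | F x < 1}) = M at h0 ⊢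
  induction M using EReal.rec with
  | bot => exact absurd h0 not_lt_bot
  | top => exact EReal.coe_lt_top _
  | coe r =>
    have hr : ∀ u, r < u → F u = 1 := fun u hu =>
      eq_one_of_sSup_lt hF1 (hM ▸ EReal.coe_lt_coe_iff.2 hu)
    exact EReal.coe_lt_coe_iff.2 <| lt_of_hasDerivAt_le_mul_sub (EReal.coe_lt_coe_iff.1 h0)
      hode (fun s _ hs => mul_le_mul_of_nonneg_left (tail_le_sub hφ hint hF0 hr hs.le) hlam) ht

lemma hasDerivAt_div_tail_comp_sub_integral {μ G : ℝ → ℝ} {lam μ₀ x t : ℝ}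
    (hF : Monotone F) (hc : ContinuousAt F (μ t)) (hμ : HasDerivAt μ (lam * φ (μ t)) t)
    (hG : HasDerivAt G (lam * ((F (μ t) - 1) * G t + max (F x - F (μ t)) 0)) t)
    (hpos : 0 < φ (μ t))
    (hg : IntervalIntegrable (fun w => max (F x - F w) 0 / φ w ^ 2) volume μ₀ (μ t)) :
    HasDerivAt (fun τ => G τ / φ (μ τ) - ∫ w in μ₀..μ τ, max (F x - F w) 0 / φ w ^ 2) 0
      t := by
  have hFm := hF.measurable
  have hφc := continuous_tail hφ hint
  have hψ : HasDerivAt (fun τ => φ (μ τ)) (lam * (F (μ t) - 1) * φ (μ t)) t :=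
    ((hasDerivAt_tail hφ hint hFm hc).comp t hμ).congr_deriv (by ring)
  have hG' : HasDerivAt G (lam * (F (μ t) - 1) * G t + lam * max (F x - F (μ t)) 0) t :=
    hG.congr_deriv (by ring)
  have hgc : ContinuousAt (fun w => max (F x - F w) 0 / φ w ^ 2) (μ t) :=
    ((continuousAt_const.sub hc).max continuousAt_const).div (hφc.continuousAt.pow 2)
      (pow_pos hpos 2).ne'
  have hgm : Measurable fun w => max (F x - F w) 0 / φ w ^ 2 := by
    have := hφc.measurable
    fun_prop
  have hI := (intervalIntegral.integral_hasDerivAt_right hg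
    hgm.stronglyMeasurable.stronglyMeasurableAtFilter hgc).comp t hμ
  refine ((hG'.div_of_linear hψ hpos.ne').sub hI).congr_deriv ?_
  field_simp
  ring

theorem eq_tail_comp_mul_of_hasDerivAt {μ G : ℝ → ℝ} {lam μ₀ x T : ℝ}
    (hF : Monotone F) (hF1 : ∀ u, F u ≤ 1) (hlam : 0 < lam) (hinit : μ 0 = μ₀)
    (hode : ∀ t, 0 ≤ t → HasDerivAt μ (lam * φ (μ t)) t) (hpos : ∀ t, 0 ≤ t → 0 < φ (μ t))
    (hGode : ∀ t, 0 ≤ t →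
      HasDerivAt G (lam * ((F (μ t) - 1) * G t + max (F x - F (μ t)) 0)) t)
    (hT : 0 ≤ T) :
    G T = φ (μ T) * (G 0 / φ μ₀ + ∫ w in μ₀..μ T, max (F x - F w) 0 / φ w ^ 2) := by
  have hμ : StrictMonoOn μ (Ici 0) := strictMonoOn_of_deriv_pos (convex_Ici 0)
    (fun t ht => (hode t ht).continuousAt.continuousWithinAt) fun t ht => by
      rw [interior_Ici] at ht
      rw [(hode t ht.le).deriv]
      exact mul_pos hlam (hpos t ht.le)
  have hmaps : MapsTo μ (Icc 0 T) (Icc μ₀ (μ T)) := fun t ht =>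
    hinit ▸ ⟨hμ.monotoneOn self_mem_Ici ht.1 ht.1, hμ.monotoneOn ht.1 hT ht.2⟩
  have hμT : μ₀ ≤ μ T := (hmaps ⟨hT, le_rfl⟩).1
  have hφc := continuous_tail hφ hint
  have hg : IntervalIntegrable (fun w => max (F x - F w) 0 / φ w ^ 2) volume μ₀ (μ T) :=
    intervalIntegrable_max_sub_div_sq hF hφc.continuousOn (fun w hw =>
      ((hpos T hT).trans_le (antitone_tail hφ hint hF1 (uIcc_of_le hμT ▸ hw).2)).ne') x
  have hc : ContinuousOn
      (fun τ => G τ / φ (μ τ) - ∫ w in μ₀..μ τ, max (F x - F w) 0 / φ w ^ 2) (Icc 0 T) := by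
    have hμc : ContinuousOn μ (Icc 0 T) := fun t ht =>
      (hode t ht.1).continuousAt.continuousWithinAt
    have hGc : ContinuousOn G (Icc 0 T) := fun t ht =>
      (hGode t ht.1).continuousAt.continuousWithinAt
    refine (hGc.div (hφc.comp_continuousOn hμc) fun t ht => (hpos t ht.1).ne').sub ?_
    refine (intervalIntegral.continuousOn_primitive_interval' hg left_mem_uIcc).comp hμc ?_
    rwa [uIcc_of_le hμT]
  have hconst := eq_of_hasDerivAt_zero_off_countable hT
    (countable_setOf_not_continuousAt_comp hF hμ.injOn) hc fun t ⟨ht, hS⟩ =>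
      hasDerivAt_div_tail_comp_sub_integral hφ hint hF (not_not.1 fun h => hS ⟨ht.1.le, h⟩)
        (hode t ht.1.le) (hGode t ht.1.le) (hpos t ht.1.le)
        (hg.mono_set <| uIcc_subset_uIcc left_mem_uIcc <|
          uIcc_of_le hμT ▸ hmaps ⟨ht.1.le, ht.2.le⟩)
  simp only [hinit, intervalIntegral.integral_same, sub_zero] at hconst
  rw [← hconst]
  field_simp [(hpos T hT).ne']
  ring

end TailIntegral

theorem stmt15_general {Ω : Type*} [MeasurableSpace Ω] (P : Measure Ω) [IsProbabilityMeasure P]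
    (X : Ω → ℝ) (hX : Measurable X)
    (hint : Integrable (fun ω => max (X ω) 0) P)
    (F : ℝ → ℝ) (hF : ∀ x, F x = (P {ω | X ω ≤ x}).toReal)
    (M : EReal) (hM : M = sSup ((fun x : ℝ => (x : EReal)) '' {x : ℝ | F x < 1}))
    (φ : ℝ → ℝ) (hφ : ∀ x, φ x = ∫ u in Ioi x, (1 - F u))
    (lam μ₀ : ℝ) (hlam : 0 < lam) (hμ₀M : (μ₀ : EReal) < M)
    (μ : ℝ → ℝ) (hinit : μ 0 = μ₀)
    (hode : ∀ t : ℝ, 0 ≤ t → HasDerivAt μ (lam * φ (μ t)) t)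
    (F₀ : ℝ → ℝ) (x : ℝ) (G : ℝ → ℝ) (hG0 : G 0 = F₀ x)
    (hGode : ∀ t : ℝ, 0 ≤ t →
      HasDerivAt G (lam * ((F (μ t) - 1) * G t + max (F x - F (μ t)) 0)) t) :
    ∀ t : ℝ, 0 ≤ t →
      G t = φ (μ t) *
        (F₀ x / φ μ₀ + ∫ w in μ₀..(μ t), max (F x - F w) 0 / (φ w) ^ 2) := by
  obtain rfl : F = cdf (P.map X) :=
    funext fun u => (hF u).trans (cdf_map_eq_measureReal hX u).symm
  have := Measure.isProbabilityMeasure_map (μ := P) hX.aemeasurable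
  have hint' := integrableOn_Ioi_one_sub_cdf <|
    (integrable_map_measure (by fun_prop) hX.aemeasurable).2 hint
  subst hM
  have hpos : ∀ t, 0 ≤ t → 0 < φ (μ t) := fun t ht => by
    obtain ⟨b, hb, hFb⟩ := exists_lt_of_coe_lt_sSup <| coe_lt_sSup_of_hasDerivAt_tail hφ hint'
      (cdf_nonneg _) (cdf_le_one _) hlam.le (hinit ▸ hμ₀M) hode ht
    exact tail_pos_of_lt_one hφ hint' (monotone_cdf _) (cdf_le_one _) hb hFb
  intro T hT
  rw [← hG0]
  exact eq_tail_comp_mul_of_hasDerivAt hφ hint' (monotone_cdf _) (cdf_le_one _) hlam hinit hode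
    hpos hGode hT

/-- for fixed x, the unique solution of
G' = λ[(F(μ(t)) − 1)·G + (F(x) − F(μ(t)))_+], G(0) = F₀(x) is
G(t) = φ(μ(t))·[F₀(x)/φ(μ₀) + ∫_{μ₀}^{μ(t)} (F(x) − F(w))_+/φ(w)² dw]. -/
theorem stmt15 {Ω : Type*} [MeasurableSpace Ω] (P : Measure Ω) [IsProbabilityMeasure P]
    (X : Ω → ℝ) (hX : Measurable X)
    (hint : Integrable (fun ω => max (X ω) 0) P)
    (F : ℝ → ℝ) (hF : ∀ x, F x = (P {ω | X ω ≤ x}).toReal)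
    (M : EReal) (hM : M = sSup ((fun x : ℝ => (x : EReal)) '' {x : ℝ | F x < 1}))
    (φ : ℝ → ℝ) (hφ : ∀ x, φ x = ∫ u in Ioi x, (1 - F u))
    (lam μ₀ : ℝ) (hlam : 0 < lam) (hμ₀ : 0 ≤ μ₀) (hμ₀M : (μ₀ : EReal) < M)
    (μ : ℝ → ℝ) (hinit : μ 0 = μ₀)
    (hode : ∀ t : ℝ, 0 ≤ t → HasDerivAt μ (lam * φ (μ t)) t)
    (F₀ : ℝ → ℝ) (x : ℝ) (G : ℝ → ℝ) (hG0 : G 0 = F₀ x)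
    (hGode : ∀ t : ℝ, 0 ≤ t →
      HasDerivAt G (lam * ((F (μ t) - 1) * G t + max (F x - F (μ t)) 0)) t) :
    ∀ t : ℝ, 0 ≤ t →
      G t = φ (μ t) *
        (F₀ x / φ μ₀ + ∫ w in μ₀..(μ t), max (F x - F w) 0 / (φ w) ^ 2) :=
  stmt15_general P X hX hint F hF M hM φ hφ lam μ₀ hlam hμ₀M μ hinit hode F₀ x G hG0 hGode
end

section
/- Let μ solve μ' = λφ(μ), μ(0) = μ₀, and define the stopping-time CDF H_t(r) = 1 − φ(μ(t))/φ(μ(t−r)) for 0 ≤ r < t, H_t(r) = 1 for r ≥ t. Then the expectation of the corresponding random variable T_t (taking values in [0, t], with atom of mass φ(μ(t))/φ(μ₀) at r = t) equals E[T_t] = (1/λ)·φ(μ(t))·∫_{μ₀}^{μ(t)} dw/φ(w)². -/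
open MeasureTheory Set Filter

/-! Since `0 ≤ T ≤ t`, the layer-cake formula and the reflection `r ↦ t - r` give
`E[T] = ∫₀ᵗ P(T ≥ r) dr = φ(μ t) ∫₀ᵗ ds / φ(μ s)`, and the substitution `w = μ s`,
`dw = λ φ(w) ds` turns this into the claimed integral. The substitution is legitimate because
`φ(μ t) > 0` (the tail formula at `r = 0` says `P(T ≥ 0) = 1`) while `φ` is antitone and `μ` is
nondecreasing, so `φ ∘ μ` stays positive on `[0, t]`. Continuity of `φ` comes from writing it as
the tail integral of `u ↦ P(X > u)`, which is integrable because `E[X⁺] < ∞`. -/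

section TailIntegral

variable {f : ℝ → ℝ}

theorem integral_Ioi_eq_sub_intervalIntegral (hf : ∀ a, IntegrableOn f (Ioi a)) (a x : ℝ) :
    ∫ u in Ioi x, f u = (∫ u in Ioi a, f u) - ∫ u in a..x, f u := by
  rw [← intervalIntegral.integral_Ioi_sub_Ioi' (hf a) (hf x), sub_sub_cancel]

theorem continuous_integral_Ioi (hf : ∀ a, IntegrableOn f (Ioi a)) :
    Continuous fun x => ∫ u in Ioi x, f u := by
  rw [funext (integral_Ioi_eq_sub_intervalIntegral hf 0)]
  refine continuous_const.sub (intervalIntegral.continuous_primitive (fun a b => ?_) 0)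
  exact ((hf (min a b - 1)).mono_set fun u hu =>
    show min a b - 1 < u by linarith [hu.1]).intervalIntegrable

theorem antitone_integral_Ioi (hf : ∀ a, IntegrableOn f (Ioi a)) (hf0 : 0 ≤ f) :
    Antitone fun x => ∫ u in Ioi x, f u := by
  intro x y hxy
  simp only [integral_Ioi_eq_sub_intervalIntegral hf x y, sub_le_self_iff]
  exact intervalIntegral.integral_nonneg hxy fun u _ => hf0 u

end TailIntegral

section TailProbability

variable {Ω : Type*} [MeasurableSpace Ω] {P : Measure Ω} {X : Ω → ℝ}

theorem integrableOn_Ioi_measureReal_lt [IsFiniteMeasure P]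
    (hint : Integrable (fun ω => max (X ω) 0) P) (a : ℝ) :
    IntegrableOn (fun u => P.real {ω | u < X ω}) (Ioi a) := by
  have hmeas : AEStronglyMeasurable (fun u => P.real {ω | u < X ω}) :=
    (Antitone.measurable fun u v huv =>
      measureReal_mono fun ω (h : v < X ω) => huv.trans_lt h).aestronglyMeasurable
  have hpos : IntegrableOn (fun u => P.real {ω | u < X ω}) (Ioi 0) := by
    refine ⟨hmeas.restrict, ?_⟩
    have hlayer := lintegral_eq_lintegral_meas_lt P
      (ae_of_all _ fun ω => le_max_right (X ω) 0) hint.aemeasurable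
    rw [hasFiniteIntegral_iff_ofReal (ae_of_all _ fun u => measureReal_nonneg)]
    calc ∫⁻ u in Ioi 0, ENNReal.ofReal (P.real {ω | u < X ω})
        = ∫⁻ u in Ioi 0, P {ω | u < max (X ω) 0} := by
          refine setLIntegral_congr_fun measurableSet_Ioi fun u (hu : 0 < u) => ?_
          simp only [measureReal_def, ENNReal.ofReal_toReal (measure_ne_top _ _), lt_max_iff,
            hu.not_gt, or_false]
      _ < ⊤ := hlayer ▸ hint.lintegral_lt_top
  have hbdd : IntegrableOn (fun u => P.real {ω | u < X ω}) (Ioc a 0) :=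
    Measure.integrableOn_of_bounded (M := P.real univ) (by simp) hmeas
      (ae_of_all _ fun u => by
        rw [Real.norm_of_nonneg measureReal_nonneg]; exact measureReal_mono (subset_univ _))
  exact (hbdd.union hpos).mono_set fun u (hu : a < u) =>
    (le_or_gt u 0).imp (fun h => ⟨hu, h⟩) id

theorem one_sub_measureReal_le_eq_measureReal_lt [IsProbabilityMeasure P] (hX : Measurable X)
    (u : ℝ) :
    1 - P.real {ω | X ω ≤ u} = P.real {ω | u < X ω} := by
  rw [← probReal_compl_eq_one_sub (measurableSet_le hX measurable_const)]
  simp only [compl_ofPred, not_le]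

end TailProbability

theorem integral_eq_intervalIntegral_of_measureReal_le {Ω : Type*} [MeasurableSpace Ω]
    {Q : Measure Ω} [IsFiniteMeasure Q] {T : Ω → ℝ} {t : ℝ} {G : ℝ → ℝ}
    (hT : Measurable T) (hT0 : ∀ ω, 0 ≤ T ω) (hTt : ∀ ω, T ω ≤ t) (ht : 0 ≤ t)
    (hG : ∀ r, 0 ≤ r → r < t → Q.real {ω | r ≤ T ω} = G r) :
    ∫ ω, T ω ∂Q = ∫ r in (0 : ℝ)..t, G r := by
  have hTint : Integrable T Q :=
    .of_bound hT.aestronglyMeasurable t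
      (ae_of_all _ fun ω => (Real.norm_of_nonneg (hT0 ω)).trans_le (hTt ω))
  rw [hTint.integral_eq_integral_Ioc_meas_le (ae_of_all _ hT0) (ae_of_all _ hTt),
    intervalIntegral.integral_of_le ht]
  refine setIntegral_congr_ae measurableSet_Ioc ?_
  filter_upwards [Measure.ae_ne volume t] with r hrt hr
  exact hG r hr.1.le (hr.2.lt_of_ne hrt)

section SeparableODE

variable {φ μ : ℝ → ℝ} {lam : ℝ}

theorem monotoneOn_Ici_of_hasDerivAt (hlam : 0 ≤ lam) (hφ : ∀ x, 0 ≤ φ x)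
    (hode : ∀ s, 0 ≤ s → HasDerivAt μ (lam * φ (μ s)) s) : MonotoneOn μ (Ici 0) :=
  monotoneOn_of_hasDerivWithinAt_nonneg (convex_Ici 0)
    (fun s hs => (hode s hs).continuousAt.continuousWithinAt)
    (fun s hs => (hode s (interior_subset hs)).hasDerivWithinAt)
    (fun _ _ => mul_nonneg hlam (hφ _))

theorem intervalIntegral_one_div_comp_eq (hlam : lam ≠ 0) (hφ : Continuous φ) {a b : ℝ}
    (hode : ∀ s ∈ uIcc a b, HasDerivAt μ (lam * φ (μ s)) s)
    (hne : ∀ s ∈ uIcc a b, φ (μ s) ≠ 0) :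
    ∫ s in a..b, 1 / φ (μ s) = 1 / lam * ∫ w in μ a..μ b, 1 / φ w ^ 2 := by
  have hμ : ContinuousOn μ (uIcc a b) := fun s hs => (hode s hs).continuousAt.continuousWithinAt
  have hg : ContinuousOn (fun w => 1 / φ w ^ 2) (μ '' uIcc a b) := by
    rintro _ ⟨s, hs, rfl⟩
    exact (continuousAt_const.div (hφ.continuousAt.pow 2)
      (pow_ne_zero 2 (hne s hs))).continuousWithinAt
  rw [← intervalIntegral.integral_deriv_smul_comp' hode
    (continuousOn_const.mul (hφ.comp_continuousOn hμ)) hg, ← intervalIntegral.integral_const_mul]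
  refine intervalIntegral.integral_congr fun s hs => ?_
  have := hne s hs
  simp only [smul_eq_mul, Function.comp_apply]
  field_simp

end SeparableODE

theorem stmt16_general {Ω : Type*} [MeasurableSpace Ω] (P : Measure Ω) [IsProbabilityMeasure P]
    (X : Ω → ℝ) (hX : Measurable X)
    (hint : Integrable (fun ω => max (X ω) 0) P)
    (F : ℝ → ℝ) (hF : ∀ x, F x = (P {ω | X ω ≤ x}).toReal)
    (φ : ℝ → ℝ) (hφ : ∀ x, φ x = ∫ u in Ioi x, (1 - F u))
    (lam μ₀ : ℝ) (hlam : 0 < lam)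
    (μ : ℝ → ℝ) (hinit : μ 0 = μ₀)
    (hode : ∀ s : ℝ, 0 ≤ s → HasDerivAt μ (lam * φ (μ s)) s)
    (t : ℝ) (ht : 0 ≤ t)
    {Ω' : Type*} [MeasurableSpace Ω'] (Q : Measure Ω') [IsProbabilityMeasure Q]
    (T : Ω' → ℝ) (hT : Measurable T)
    (hT0 : ∀ ω, 0 ≤ T ω) (hTt : ∀ ω, T ω ≤ t)
    (hTail : ∀ r : ℝ, 0 ≤ r → r < t →
      (Q {ω | r ≤ T ω}).toReal = φ (μ t) / φ (μ (t - r))) :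
    (∫ ω, T ω ∂Q) = (1 / lam) * φ (μ t) * ∫ w in μ₀..(μ t), 1 / (φ w) ^ 2 := by
  have hφ' : φ = fun x => ∫ u in Ioi x, P.real {ω | u < X ω} := by
    ext x
    simp only [hφ, hF, ← one_sub_measureReal_le_eq_measureReal_lt hX, measureReal_def]
  have htail := integrableOn_Ioi_measureReal_lt hint
  have hφcont : Continuous φ := hφ' ▸ continuous_integral_Ioi htail
  have hφanti : Antitone φ := hφ' ▸ antitone_integral_Ioi htail fun _ => measureReal_nonneg
  have hφ0 : ∀ x, 0 ≤ φ x := fun x =>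
    hφ' ▸ setIntegral_nonneg measurableSet_Ioi fun _ _ => measureReal_nonneg
  rw [integral_eq_intervalIntegral_of_measureReal_le hT hT0 hTt ht hTail]
  rcases ht.eq_or_lt with rfl | htpos
  · simp [hinit]
  have hφt : φ (μ t) ≠ 0 := by
    intro h
    simpa [h, hT0] using hTail 0 le_rfl htpos
  have hμmono := monotoneOn_Ici_of_hasDerivAt hlam.le hφ0 hode
  have hne : ∀ s ∈ uIcc 0 t, φ (μ s) ≠ 0 := by
    rw [uIcc_of_le ht]
    exact fun s hs => (lt_of_lt_of_le ((hφ0 _).lt_of_ne' hφt)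
      (hφanti (hμmono hs.1 htpos.le hs.2))).ne'
  calc ∫ r in (0 : ℝ)..t, φ (μ t) / φ (μ (t - r))
      = φ (μ t) * ∫ s in (0 : ℝ)..t, 1 / φ (μ s) := by
        rw [intervalIntegral.integral_comp_sub_left (fun s => φ (μ t) / φ (μ s)), sub_self,
          sub_zero, ← intervalIntegral.integral_const_mul]
        simp_rw [mul_one_div]
    _ = _ := by
        rw [intervalIntegral_one_div_comp_eq hlam.ne' hφcont
          (fun s hs => hode s (by rw [uIcc_of_le ht] at hs; exact hs.1)) hne, hinit]
        ring

/-- if T_t takes values in [0, t] and P(T_t ≥ r) = φ(μ(t))/φ(μ(t−r)) for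
0 ≤ r < t (with the remaining mass φ(μ(t))/φ(μ₀) at r = t), then
E[T_t] = (1/λ)·φ(μ(t))·∫_{μ₀}^{μ(t)} dw/φ(w)². -/
theorem stmt16 {Ω : Type*} [MeasurableSpace Ω] (P : Measure Ω) [IsProbabilityMeasure P]
    (X : Ω → ℝ) (hX : Measurable X)
    (hint : Integrable (fun ω => max (X ω) 0) P)
    (F : ℝ → ℝ) (hF : ∀ x, F x = (P {ω | X ω ≤ x}).toReal)
    (M : EReal) (hM : M = sSup ((fun x : ℝ => (x : EReal)) '' {x : ℝ | F x < 1}))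
    (φ : ℝ → ℝ) (hφ : ∀ x, φ x = ∫ u in Ioi x, (1 - F u))
    (lam μ₀ : ℝ) (hlam : 0 < lam) (hμ₀ : 0 ≤ μ₀) (hμ₀M : (μ₀ : EReal) < M)
    (μ : ℝ → ℝ) (hinit : μ 0 = μ₀)
    (hode : ∀ s : ℝ, 0 ≤ s → HasDerivAt μ (lam * φ (μ s)) s)
    (t : ℝ) (ht : 0 ≤ t)
    {Ω' : Type*} [MeasurableSpace Ω'] (Q : Measure Ω') [IsProbabilityMeasure Q]
    (T : Ω' → ℝ) (hT : Measurable T)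
    (hT0 : ∀ ω, 0 ≤ T ω) (hTt : ∀ ω, T ω ≤ t)
    (hTail : ∀ r : ℝ, 0 ≤ r → r < t →
      (Q {ω | r ≤ T ω}).toReal = φ (μ t) / φ (μ (t - r))) :
    (∫ ω, T ω ∂Q) = (1 / lam) * φ (μ t) * ∫ w in μ₀..(μ t), 1 / (φ w) ^ 2 :=
  stmt16_general P X hX hint F hF φ hφ lam μ₀ hlam μ hinit hode t ht Q T hT hT0 hTt hTail
end

section
/- Assume M = sup{x : F(x)<1} < ∞ and that lim_{x→M⁻} φ(x)/(M−x)^{p+1} = c for some p > 0, c > 0, where φ(x) = ∫_x^∞(1−F(u))du. Let μ solve μ' = λφ(μ), μ(0) = μ₀ ∈ [0, M). Then lim_{t→∞} t^{1/p}·(M − μ(t)) = (λpc)^{−1/p}. -/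
open MeasureTheory Set Filter Topology NNReal Asymptotics

/-!
The tail integral `φ` vanishes at `M`, is positive below `M`, and is `1`-Lipschitz because its
integrand lies in `[0, 1]`. Hence the constant `M` is a solution of `μ' = λ φ(μ)` and, by
uniqueness, `μ` increases towards `M` without ever reaching it. Along the trajectory
`w = (M - μ)^(-p)` satisfies `w' = p λ φ(μ) / (M - μ)^(p+1) → p λ c`, so `w(t) / t → p λ c`;
raising to the power `-1/p` gives the claim.
-/

section TailIntegral

variable {g : ℝ → ℝ} {M : ℝ}

theorem Antitone.nonneg_of_eq_zero (hg : Antitone g) (hM : ∀ u, M ≤ u → g u = 0) (u : ℝ) :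
    0 ≤ g u :=
  (hM _ (le_max_right u M)).symm.le.trans (hg (le_max_left u M))

theorem Antitone.integrableOn_Ioi_of_eq_zero (hg : Antitone g) (hM : ∀ u, M ≤ u → g u = 0)
    (x : ℝ) : IntegrableOn g (Ioi x) :=
  IntegrableOn.of_forall_sdiff_eq_zero
    (hg.locallyIntegrable.integrableOn_isCompact (isCompact_Icc (a := x) (b := M)))
    measurableSet_Ioi fun u hu => hM u (not_le.1 fun h => hu.2 ⟨hu.1.le, h⟩).le

theorem antitone_setIntegral_Ioi (h0 : ∀ u, 0 ≤ g u) (hint : ∀ x, IntegrableOn g (Ioi x)) :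
    Antitone fun x => ∫ u in Ioi x, g u := fun x _ hxy =>
  setIntegral_mono_set (hint x) (Eventually.of_forall fun u => h0 u)
    (Eventually.of_forall (Ioi_subset_Ioi hxy))

theorem lipschitzWith_one_setIntegral_Ioi (h0 : ∀ u, 0 ≤ g u) (h1 : ∀ u, g u ≤ 1)
    (hint : ∀ x, IntegrableOn g (Ioi x)) : LipschitzWith 1 fun x => ∫ u in Ioi x, g u :=
  LipschitzWith.mk_one fun x y => by
    rw [Real.dist_eq, intervalIntegral.integral_Ioi_sub_Ioi' (hint x) (hint y), ← Real.norm_eq_abs,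
      dist_comm, Real.dist_eq, ← one_mul |y - x|]
    exact intervalIntegral.norm_integral_le_of_norm_le_const fun u _ => by
      rw [Real.norm_eq_abs, abs_of_nonneg (h0 u)]; exact h1 u

theorem setIntegral_Ioi_pos {x : ℝ} (h0 : ∀ u, 0 ≤ g u) (hint : IntegrableOn g (Ioi x))
    (hpos : ∀ u < M, 0 < g u) (hx : x < M) : 0 < ∫ u in Ioi x, g u := by
  rw [setIntegral_pos_iff_support_of_nonneg_ae (Eventually.of_forall h0) hint]
  refine lt_of_lt_of_le ?_ (measure_mono fun u (hu : u ∈ Ioo x M) => ⟨(hpos u hu.2).ne', hu.1⟩)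
  simpa using hx

end TailIntegral

section Trajectory

variable {f μ : ℝ → ℝ} {M : ℝ}

theorem lt_of_hasDerivAt_of_lipschitzWith {K : ℝ≥0} (hf : LipschitzWith K f) (hfM : f M = 0)
    (hode : ∀ t, 0 ≤ t → HasDerivAt μ (f (μ t)) t) (h0 : μ 0 < M) {t : ℝ} (ht : 0 ≤ t) :
    μ t < M := by
  by_contra! hle
  have hcont : ContinuousOn μ (Icc 0 t) := fun s hs =>
    (hode s hs.1).continuousAt.continuousWithinAt
  obtain ⟨s, hs, hμs⟩ := intermediate_value_Icc ht hcont ⟨h0.le, hle⟩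
  have hconst : EqOn μ (fun _ => M) (Icc 0 s) :=
    ODE_solution_unique_of_mem_Icc_left (v := fun _ => f) (s := fun _ => univ)
      (fun _ _ => hf.lipschitzOnWith) (hcont.mono (Icc_subset_Icc_right hs.2))
      (fun r hr => (hode r hr.1.le).hasDerivWithinAt) (fun _ _ => trivial) continuousOn_const
      (fun r _ => hfM ▸ hasDerivWithinAt_const r _ M) (fun _ _ => trivial) hμs
  exact h0.ne (hconst ⟨le_rfl, hs.1⟩)

theorem tendsto_nhdsLT_of_hasDerivAt (hf : Antitone f) (hpos : ∀ x < M, 0 < f x)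
    (hode : ∀ t, 0 ≤ t → HasDerivAt μ (f (μ t)) t) (hlt : ∀ t, 0 ≤ t → μ t < M) :
    Tendsto μ atTop (𝓝[<] M) := by
  have hcont : ContinuousOn μ (Ici 0) := fun t ht => (hode t ht).continuousAt.continuousWithinAt
  have hdiff : DifferentiableOn ℝ μ (interior (Ici 0)) := fun t ht =>
    (hode t (interior_subset ht)).differentiableAt.differentiableWithinAt
  have hderiv : ∀ t ∈ interior (Ici (0 : ℝ)), deriv μ t = f (μ t) := fun t ht =>
    (hode t (interior_subset ht)).deriv
  have hmono : MonotoneOn μ (Ici 0) := monotoneOn_of_deriv_nonneg (convex_Ici 0) hcont hdiff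
    fun t ht => hderiv t ht ▸ (hpos _ (hlt t (interior_subset ht))).le
  have hreach : ∀ a < M, ∃ T, 0 ≤ T ∧ a < μ T := by
    intro a ha
    by_contra! hle
    -- below level `a` the speed is at least `f a > 0`, so `μ` would grow without bound
    have hlin : ∀ t, 0 ≤ t → f a * t ≤ μ t - μ 0 := fun t ht => by
      simpa using (convex_Ici 0).mul_sub_le_image_sub_of_le_deriv hcont hdiff
        (fun s hs => hderiv s hs ▸ hf (hle s (interior_subset hs))) 0 self_mem_Ici t ht ht
    have hunbdd : Tendsto (fun t => f a * t) atTop atTop := tendsto_id.const_mul_atTop (hpos a ha)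
    obtain ⟨t, ht0, ht⟩ :=
      ((eventually_ge_atTop 0).and (hunbdd.eventually_gt_atTop (a - μ 0))).exists
    linarith [hlin t ht0, hle t ht0]
  refine tendsto_nhdsWithin_iff.2 ⟨tendsto_order.2 ⟨fun a ha => ?_, fun a ha => ?_⟩,
    (eventually_ge_atTop 0).mono hlt⟩
  · obtain ⟨T, hT0, hT⟩ := hreach a ha
    filter_upwards [eventually_ge_atTop T] with t ht
    exact hT.trans_le (hmono hT0 (hT0.trans ht) ht)
  · filter_upwards [eventually_ge_atTop 0] with t ht
    exact (hlt t ht).trans ha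

end Trajectory

section Asymptotics

variable {w w' : ℝ → ℝ}

theorem isLittleO_id_of_hasDerivAt_of_tendsto_zero (hw : ∀ᶠ t in atTop, HasDerivAt w (w' t) t)
    (hw' : Tendsto w' atTop (𝓝 0)) : w =o[atTop] id := by
  refine isLittleO_iff.2 fun ε hε => ?_
  obtain ⟨T, hT⟩ := eventually_atTop.1 ((eventually_ge_atTop 0).and
    (hw.and (hw'.eventually (eventually_abs_sub_lt 0 (half_pos hε)))))
  filter_upwards [eventually_ge_atTop T, eventually_ge_atTop (2 * |w T| / ε)] with t hTt ht
  have hmvt : |w t - w T| ≤ ε / 2 * (t - T) :=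
    norm_image_sub_le_of_norm_deriv_le_segment'
      (fun s hs => (hT s hs.1).2.1.hasDerivWithinAt)
      (fun s hs => by simpa using (hT s hs.1).2.2.le) t ⟨hTt, le_rfl⟩
  have hT0 := (hT T le_rfl).1
  have hwT : |w T| ≤ ε / 2 * t := by
    rw [div_le_iff₀ hε] at ht; linarith
  rw [Real.norm_eq_abs, Real.norm_eq_abs, id, abs_of_nonneg (hT0.trans hTt)]
  linarith [abs_sub_abs_le_abs_sub (w t) (w T), mul_nonneg hε.le hT0]

theorem tendsto_div_id_of_hasDerivAt {A : ℝ} (hw : ∀ᶠ t in atTop, HasDerivAt w (w' t) t)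
    (hw' : Tendsto w' atTop (𝓝 A)) : Tendsto (fun t => w t / t) atTop (𝓝 A) := by
  have hlin : (fun t => w t - A * t) =o[atTop] id :=
    isLittleO_id_of_hasDerivAt_of_tendsto_zero
      (hw.mono fun t ht => ht.sub ((hasDerivAt_id t).const_mul A))
      (by simpa using hw'.sub_const A)
  rw [← zero_add A]
  refine (hlin.tendsto_div_nhds_zero.add_const A).congr' ?_
  filter_upwards [eventually_ne_atTop 0] with t ht
  simp only [id]
  field_simp
  ring

theorem HasDerivAt.sub_rpow_neg {μ : ℝ → ℝ} {v M p t : ℝ} (hμ : HasDerivAt μ v t) (ht : μ t < M) :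
    HasDerivAt (fun s => (M - μ s) ^ (-p)) (p * (v / (M - μ t) ^ (p + 1))) t := by
  have hpos : 0 < M - μ t := sub_pos.2 ht
  convert (hμ.const_sub M).rpow_const (p := -p) (Or.inl hpos.ne') using 1
  rw [show -p - 1 = -(p + 1) by ring, Real.rpow_neg hpos.le]
  ring

theorem rpow_neg_div_rpow_neg_one_div {x t p : ℝ} (hx : 0 ≤ x) (ht : 0 ≤ t) (hp : p ≠ 0) :
    (x ^ (-p) / t) ^ (-(1 / p)) = t ^ (1 / p) * x := by
  rw [Real.div_rpow (Real.rpow_nonneg hx _) ht, ← Real.rpow_mul hx,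
    show -p * -(1 / p) = 1 by field_simp, Real.rpow_one, Real.rpow_neg ht, div_inv_eq_mul,
    mul_comm]

theorem tendsto_rpow_mul_sub_of_hasDerivAt {f μ : ℝ → ℝ} {M p κ : ℝ} (hp : p ≠ 0) (hκ : κ ≠ 0)
    (hf : Tendsto (fun x => f x / (M - x) ^ (p + 1)) (𝓝[<] M) (𝓝 κ))
    (hμ : Tendsto μ atTop (𝓝[<] M)) (hode : ∀ᶠ t in atTop, HasDerivAt μ (f (μ t)) t) :
    Tendsto (fun t => t ^ (1 / p) * (M - μ t)) atTop (𝓝 ((p * κ) ^ (-(1 / p)))) := by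
  have hlt : ∀ᶠ t in atTop, μ t < M := (tendsto_nhdsWithin_iff.1 hμ).2
  have hgrowth : Tendsto (fun t => (M - μ t) ^ (-p) / t) atTop (𝓝 (p * κ)) :=
    tendsto_div_id_of_hasDerivAt ((hode.and hlt).mono fun t ht => ht.1.sub_rpow_neg ht.2)
      ((hf.comp hμ).const_mul p)
  refine ((Real.continuousAt_rpow_const _ _ (Or.inl (mul_ne_zero hp hκ))).tendsto.comp
    hgrowth).congr' ?_
  filter_upwards [hlt, eventually_ge_atTop 0] with t hμt ht
  exact rpow_neg_div_rpow_neg_one_div (sub_nonneg.2 hμt.le) ht hp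

end Asymptotics

theorem stmt17_general {Ω : Type*} [MeasurableSpace Ω] (P : Measure Ω) [IsProbabilityMeasure P]
    (X : Ω → ℝ)
    (F : ℝ → ℝ) (hF : ∀ x, F x = (P {ω | X ω ≤ x}).toReal)
    (M : ℝ) (hM1 : ∀ x : ℝ, x < M → F x < 1) (hM2 : ∀ x : ℝ, M ≤ x → F x = 1)
    (φ : ℝ → ℝ) (hφ : ∀ x, φ x = ∫ u in Ioi x, (1 - F u))
    (p c lam μ₀ : ℝ) (hp : 0 < p) (hc : 0 < c) (hlam : 0 < lam)
    (hμ₀M : μ₀ < M)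
    (hlim : Tendsto (fun x => φ x / (M - x) ^ (p + 1)) (nhdsWithin M (Iio M)) (nhds c))
    (μ : ℝ → ℝ) (hinit : μ 0 = μ₀)
    (hode : ∀ t : ℝ, 0 ≤ t → HasDerivAt μ (lam * φ (μ t)) t) :
    Tendsto (fun t : ℝ => t ^ (1 / p) * (M - μ t)) atTop
      (nhds ((lam * p * c) ^ (-(1 / p)))) := by
  have hFmono : Monotone F := fun x y hxy => by
    rw [hF, hF]; exact measureReal_mono fun ω (hω : X ω ≤ x) => hω.trans hxy
  have hg : Antitone fun u => 1 - F u := fun x y hxy => sub_le_sub_left (hFmono hxy) 1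
  have hgM : ∀ u, M ≤ u → 1 - F u = 0 := fun u hu => by rw [hM2 u hu, sub_self]
  have hg0 := hg.nonneg_of_eq_zero hgM
  have hgint := hg.integrableOn_Ioi_of_eq_zero hgM
  have hφeq : φ = fun x => ∫ u in Ioi x, (1 - F u) := funext hφ
  have hφlip : LipschitzWith 1 φ := hφeq ▸ lipschitzWith_one_setIntegral_Ioi hg0
    (fun u => by rw [hF]; linarith [ENNReal.toReal_nonneg (a := P {ω | X ω ≤ u})]) hgint
  have hφM : φ M = 0 := by
    rw [hφ]; exact setIntegral_eq_zero_of_forall_eq_zero fun u (hu : M < u) => hgM u hu.le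
  have hφpos : ∀ x < M, 0 < φ x := fun x hx => hφ x ▸
    setIntegral_Ioi_pos hg0 (hgint x) (fun u hu => sub_pos.2 (hM1 u hu)) hx
  have hbelow : ∀ t, 0 ≤ t → μ t < M := fun t ht =>
    lt_of_hasDerivAt_of_lipschitzWith ((lipschitzWith_smul lam).comp hφlip)
      (by simp [hφM]) hode (hinit ▸ hμ₀M) ht
  have hμ := tendsto_nhdsLT_of_hasDerivAt ((hφeq ▸ antitone_setIntegral_Ioi hg0 hgint).const_mul
    hlam.le) (fun x hx => mul_pos hlam (hφpos x hx)) hode hbelow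
  convert tendsto_rpow_mul_sub_of_hasDerivAt (f := fun x => lam * φ x) hp.ne' (mul_pos hlam hc).ne'
    (by simpa only [mul_div_assoc] using hlim.const_mul lam) hμ
    ((eventually_ge_atTop 0).mono hode) using 3
  ring

/-- if M < ∞ and φ(x)/(M−x)^{p+1} → c as x → M⁻ (p, c > 0), then
t^{1/p}·(M − μ(t)) → (λpc)^{−1/p} as t → ∞, i.e.
μ(t) = M − (λpc)^{−1/p}·t^{−1/p} + o(t^{−1/p}). -/
theorem stmt17 {Ω : Type*} [MeasurableSpace Ω] (P : Measure Ω) [IsProbabilityMeasure P]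
    (X : Ω → ℝ) (hX : Measurable X)
    (hint : Integrable (fun ω => max (X ω) 0) P)
    (F : ℝ → ℝ) (hF : ∀ x, F x = (P {ω | X ω ≤ x}).toReal)
    (M : ℝ) (hM1 : ∀ x : ℝ, x < M → F x < 1) (hM2 : ∀ x : ℝ, M ≤ x → F x = 1)
    (φ : ℝ → ℝ) (hφ : ∀ x, φ x = ∫ u in Ioi x, (1 - F u))
    (p c lam μ₀ : ℝ) (hp : 0 < p) (hc : 0 < c) (hlam : 0 < lam)
    (hμ₀ : 0 ≤ μ₀) (hμ₀M : μ₀ < M)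
    (hlim : Tendsto (fun x => φ x / (M - x) ^ (p + 1)) (nhdsWithin M (Iio M)) (nhds c))
    (μ : ℝ → ℝ) (hinit : μ 0 = μ₀)
    (hode : ∀ t : ℝ, 0 ≤ t → HasDerivAt μ (lam * φ (μ t)) t) :
    Tendsto (fun t : ℝ => t ^ (1 / p) * (M - μ t)) atTop
      (nhds ((lam * p * c) ^ (-(1 / p)))) :=
  stmt17_general P X F hF M hM1 hM2 φ hφ p c lam μ₀ hp hc hlam hμ₀M hlim μ hinit hode
end
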